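/- arXiv:2509.07271 — 4 statements merged into one kernel-verified Lean document; each statement's English description precedes it below -/
import Mathlib

section
/- Minimax characterization of type II errors for CQ channels: For any ε ≥ 0, any family 𝓕 of sets of free CQ channels satisfying Axioms CQ2 and CQ4, and any CQ channel Φ : X → D(H), it holds that β_ε(Φ‖𝓕) = max_{Φ_free ∈ 𝓕} β_ε(Φ‖Φ_free). -/
open scoped Kronecker
open Filter Matrix
open scoped ComplexOrder

attribute [local instance] Classical.propDecidable

noncomputable section

namespace CQ

variable {X d : Type*}

/-- Apply a real function to a matrix via its spectral decomposition (junk value `0` if the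
matrix is not Hermitian).  For positive semidefinite matrices and `f 0 = 0` this realizes the
"on-support" functional calculus. -/
def matFun [Fintype d] [DecidableEq d] (f : ℝ → ℝ) (A : Matrix d d ℂ) : Matrix d d ℂ :=
  if hA : A.IsHermitian then
    (hA.eigenvectorUnitary : Matrix d d ℂ) *
      Matrix.diagonal (fun i => (f (hA.eigenvalues i) : ℂ)) *
      star (hA.eigenvectorUnitary : Matrix d d ℂ)
  else 0

/-- Matrix logarithm taken on the support. -/
def matLog [Fintype d] [DecidableEq d] (A : Matrix d d ℂ) : Matrix d d ℂ := matFun Real.log A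

/-- Real matrix power taken on the support. -/
def matRpow [Fintype d] [DecidableEq d] (A : Matrix d d ℂ) (r : ℝ) : Matrix d d ℂ :=
  matFun (fun t => t ^ r) A

/-- Projection `{A ≥ 0}` onto the eigenspaces of nonnegative eigenvalues of a Hermitian matrix. -/
def posProj [Fintype d] [DecidableEq d] (A : Matrix d d ℂ) : Matrix d d ℂ :=
  matFun (fun t => if 0 ≤ t then 1 else 0) A

/-- `supp A ⊆ supp B`, expressed via ranges. -/
def suppLE [Fintype d] [DecidableEq d] (A B : Matrix d d ℂ) : Prop :=
  LinearMap.range (Matrix.toLin' A) ≤ LinearMap.range (Matrix.toLin' B)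

/-- Quantum (Umegaki) relative entropy, with value `⊤` when the support condition fails. -/
def qRelEntropy [Fintype d] [DecidableEq d] (ρ σ : Matrix d d ℂ) : EReal :=
  if suppLE ρ σ then (((ρ * (matLog ρ - matLog σ)).trace.re : ℝ) : EReal) else ⊤

/-- Sandwiched Rényi relative entropy of order `α`, with value `⊤` when the support condition
fails. -/
def sandRenyi [Fintype d] [DecidableEq d] (α : ℝ) (ρ σ : Matrix d d ℂ) : EReal :=
  if suppLE ρ σ then
    ((((α - 1)⁻¹ *
        Real.log ((matRpow (matRpow σ ((1 - α) / (2 * α)) * ρ *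
          matRpow σ ((1 - α) / (2 * α))) α).trace.re)) : ℝ) : EReal)
  else ⊤

/-- A CQ channel: every output is a density operator. -/
def IsCQChannel [Fintype d] (Φ : X → Matrix d d ℂ) : Prop :=
  ∀ x, (Φ x).PosSemidef ∧ (Φ x).trace = 1

/-- Channel divergence `D(Φ₁‖Φ₂) = max_x D(Φ₁(x)‖Φ₂(x))`. -/
def chDiv [Fintype X] [Fintype d] [DecidableEq d] (Φ₁ Φ₂ : X → Matrix d d ℂ) : EReal :=
  ⨆ x, qRelEntropy (Φ₁ x) (Φ₂ x)

/-- Sandwiched Rényi channel divergence. -/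
def chRenyiDiv [Fintype X] [Fintype d] [DecidableEq d] (α : ℝ) (Φ₁ Φ₂ : X → Matrix d d ℂ) :
    EReal :=
  ⨆ x, sandRenyi α (Φ₁ x) (Φ₂ x)

/-- `D(Φ‖𝓕) = min_{Φf ∈ 𝓕} D(Φ‖Φf)`. -/
def chDivSet [Fintype X] [Fintype d] [DecidableEq d] (Φ : X → Matrix d d ℂ)
    (S : Set (X → Matrix d d ℂ)) : EReal :=
  ⨅ Φf ∈ S, chDiv Φ Φf

/-- `D̃_α(Φ‖𝓕) = min_{Φf ∈ 𝓕} D̃_α(Φ‖Φf)`. -/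
def chRenyiDivSet [Fintype X] [Fintype d] [DecidableEq d] (α : ℝ) (Φ : X → Matrix d d ℂ)
    (S : Set (X → Matrix d d ℂ)) : EReal :=
  ⨅ Φf ∈ S, chRenyiDiv α Φ Φf

/-- Probability distribution on a finite alphabet. -/
def IsProbDist [Fintype X] (p : X → ℝ) : Prop := (∀ x, 0 ≤ p x) ∧ ∑ x, p x = 1

/-- POVM element: `0 ≤ T ≤ 1`. -/
def IsPOVMElem [Fintype d] [DecidableEq d] (T : Matrix d d ℂ) : Prop :=
  T.PosSemidef ∧ (1 - T).PosSemidef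

/-- Type-I error of the test `(p, {T_x})` for the channel `Φ`. -/
def typeIErrVal [Fintype X] [Fintype d] [DecidableEq d] (Φ : X → Matrix d d ℂ) (p : X → ℝ)
    (T : X → Matrix d d ℂ) : ℝ :=
  ∑ x, p x * ((1 - T x) * Φ x).trace.re

/-- Optimal type-II error `β_ε(Φ₁‖Φ₂)` between two CQ channels. -/
def typeIIErr [Fintype X] [Fintype d] [DecidableEq d] (ε : ℝ) (Φ₁ Φ₂ : X → Matrix d d ℂ) : ℝ :=
  sInf { v | ∃ p T, IsProbDist p ∧ (∀ x, IsPOVMElem (T x)) ∧ typeIErrVal Φ₁ p T ≤ ε ∧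
    v = ∑ x, p x * (T x * Φ₂ x).trace.re }

/-- Optimal type-II error `β_ε(Φ‖𝓕)` against a set of CQ channels. -/
def typeIIErrSet [Fintype X] [Fintype d] [DecidableEq d] (ε : ℝ) (Φ : X → Matrix d d ℂ)
    (S : Set (X → Matrix d d ℂ)) : ℝ :=
  sInf { v | ∃ p T, IsProbDist p ∧ (∀ x, IsPOVMElem (T x)) ∧ typeIErrVal Φ p T ≤ ε ∧
    v = sSup { w | ∃ Φf ∈ S, w = ∑ x, p x * (T x * Φf x).trace.re } }

/-- Tensor product of two CQ channels. -/
def prodChannel {X' d' : Type*} (Φ : X → Matrix d d ℂ) (Φ' : X' → Matrix d' d' ℂ) :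
    X × X' → Matrix (d × d') (d × d') ℂ :=
  fun x => Φ x.1 ⊗ₖ Φ' x.2

/-- `n`-fold tensor power `Φ^{⊗n}` of a CQ channel, realized entrywise. -/
def powChannel (Φ : X → Matrix d d ℂ) (n : ℕ) :
    (Fin n → X) → Matrix (Fin n → d) (Fin n → d) ℂ :=
  fun xs => Matrix.of fun i j => ∏ k, Φ (xs k) (i k) (j k)

def finEquiv (n m : ℕ) (γ : Type*) : ((Fin n → γ) × (Fin m → γ)) ≃ (Fin (n + m) → γ) :=
  (Equiv.sumArrowEquivProdArrow (Fin n) (Fin m) γ).symm.trans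
    (Equiv.arrowCongr finSumFinEquiv (Equiv.refl γ))

/-- Tensor product of an `n`-fold and an `m`-fold CQ channel, as an `(n+m)`-fold CQ channel. -/
def cqTensor {n m : ℕ} (Φ : (Fin n → X) → Matrix (Fin n → d) (Fin n → d) ℂ)
    (Ψ : (Fin m → X) → Matrix (Fin m → d) (Fin m → d) ℂ) :
    (Fin (n + m) → X) → Matrix (Fin (n + m) → d) (Fin (n + m) → d) ℂ :=
  fun xs =>
    Matrix.reindex (finEquiv n m d) (finEquiv n m d)
      (Φ ((finEquiv n m X).symm xs).1 ⊗ₖ Ψ ((finEquiv n m X).symm xs).2)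

/-- All members of the family are CQ channels. -/
def FamilyCQ [Fintype d]
    (F : (n : ℕ) → Set ((Fin n → X) → Matrix (Fin n → d) (Fin n → d) ℂ)) : Prop :=
  ∀ n, ∀ Φ ∈ F n, IsCQChannel Φ

/-- Axiom CQ1: each set contains a CQ channel whose outputs are all full-rank,
equivalently bounded below by `Λ·I` for some `Λ ∈ (0,1]`. -/
def AxCQ1 [Fintype d] [DecidableEq d]
    (F : (n : ℕ) → Set ((Fin n → X) → Matrix (Fin n → d) (Fin n → d) ℂ)) : Prop :=
  ∀ n, ∃ Φfull ∈ F n, ∃ Λ : ℝ, 0 < Λ ∧ Λ ≤ 1 ∧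
    ∀ xs, (Φfull xs - Λ • (1 : Matrix (Fin n → d) (Fin n → d) ℂ)).PosSemidef

/-- Axiom CQ2: each set is compact. -/
def AxCQ2 (F : (n : ℕ) → Set ((Fin n → X) → Matrix (Fin n → d) (Fin n → d) ℂ)) : Prop :=
  ∀ n, IsCompact (F n)

/-- Axiom CQ3: the family is closed under tensor products. -/
def AxCQ3 (F : (n : ℕ) → Set ((Fin n → X) → Matrix (Fin n → d) (Fin n → d) ℂ)) : Prop :=
  ∀ n m, ∀ Φ ∈ F n, ∀ Ψ ∈ F m, cqTensor Φ Ψ ∈ F (n + m)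

/-- Axiom CQ4: each set is convex. -/
def AxCQ4 (F : (n : ℕ) → Set ((Fin n → X) → Matrix (Fin n → d) (Fin n → d) ℂ)) : Prop :=
  ∀ n, Convex ℝ (F n)

/-- Single-set version of Axiom CQ1. -/
def SetCQ1 [Fintype d] [DecidableEq d] (S : Set (X → Matrix d d ℂ)) : Prop :=
  ∃ Φfull ∈ S, ∃ Λ : ℝ, 0 < Λ ∧ Λ ≤ 1 ∧ ∀ x, (Φfull x - Λ • (1 : Matrix d d ℂ)).PosSemidef

/-- Trace distance `(1/2)‖A−B‖₁` (for Hermitian differences; junk `0` otherwise). -/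
def traceDist [Fintype d] [DecidableEq d] (A B : Matrix d d ℂ) : ℝ :=
  if h : (A - B).IsHermitian then (1 / 2) * ∑ i, |h.eigenvalues i| else 0

/-- Diamond distance between CQ channels. -/
def diamondDist [Fintype X] [Fintype d] [DecidableEq d] (Φ₁ Φ₂ : X → Matrix d d ℂ) : ℝ :=
  ⨆ x, traceDist (Φ₁ x) (Φ₂ x)

/-- Generalized robustness of a CQ channel with respect to a set of free CQ channels. -/
def genRobustness [Fintype X] [Fintype d] (S : Set (X → Matrix d d ℂ))
    (Φ : X → Matrix d d ℂ) : ℝ :=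
  sInf { s | 0 ≤ s ∧ ∃ Φ' : X → Matrix d d ℂ, IsCQChannel Φ' ∧
    (fun x => (1 + s)⁻¹ • (Φ x + s • Φ' x)) ∈ S }

/-- `N ⊗ id_k` acting blockwise. -/
def tensorIdMap {din dout : Type*}
    (N : Matrix din din ℂ →ₗ[ℂ] Matrix dout dout ℂ) (k : Type*)
    (M : Matrix (din × k) (din × k) ℂ) : Matrix (dout × k) (dout × k) ℂ :=
  Matrix.of fun a b => N (Matrix.of fun i j => M (i, a.2) (j, b.2)) a.1 b.1

/-- Completely positive and trace preserving linear map on matrices. -/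
def IsCPTP {din dout : Type*} [Fintype din] [Fintype dout]
    (N : Matrix din din ℂ →ₗ[ℂ] Matrix dout dout ℂ) : Prop :=
  (∀ (k : Type) [Fintype k], ∀ M : Matrix (din × k) (din × k) ℂ,
      M.PosSemidef → (tensorIdMap N k M).PosSemidef) ∧
  ∀ M : Matrix din din ℂ, (N M).trace = M.trace

/-- Action `(Θ ⊗ id)[Φ]` of a superchannel (given by `p_Θ` and CPTP maps `N`) on a CQ channel
with auxiliary classical input and quantum output. -/
def superAct {Xin Xout Xaux din dout daux : Type*} [Fintype Xin]
    (p : Xout → Xin → ℝ)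
    (N : Xin → Xout → Matrix din din ℂ →ₗ[ℂ] Matrix dout dout ℂ)
    (Φ : Xin × Xaux → Matrix (din × daux) (din × daux) ℂ) :
    Xout × Xaux → Matrix (dout × daux) (dout × daux) ℂ :=
  fun x => ∑ xi : Xin, p x.1 xi • tensorIdMap (N xi x.1) daux (Φ (xi, x.2))

/-- The index `b·M + m` of the `m`-th member of the `b`-th complete block of size `M`. -/
def grpIdx {n M : ℕ} (b : Fin (n / M)) (m : Fin M) : Fin n :=
  ⟨(b : ℕ) * M + m, by
    have h1 : ((b : ℕ) + 1) * M ≤ n / M * M :=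
      Nat.mul_le_mul_right M b.2
    have h3 : n / M * M ≤ n := Nat.div_mul_le_self n M
    have h4 : (m : ℕ) < M := m.2
    have h5 : (b : ℕ) * M + M ≤ n := by rw [add_mul, one_mul] at h1; omega
    omega⟩

/-- The index `(n/M)·M + k` of the `k`-th leftover position. -/
def remIdx {n M : ℕ} (k : Fin (n % M)) : Fin n :=
  ⟨n / M * M + k, by
    have h1 : n / M * M + n % M = n := by rw [mul_comm]; exact Nat.div_add_mod n M
    have h2 : (k : ℕ) < n % M := k.2
    omega⟩

/-- The channel `(Φ₂^{(M)})^{⊗ (n/M)} ⊗ Φfull^{⊗ (n % M)}`, realized entrywise on `n` tensor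
factors grouped into blocks of size `M` followed by the leftover factors. -/
def mixedPow {M : ℕ} (Φ₂M : (Fin M → X) → Matrix (Fin M → d) (Fin M → d) ℂ)
    (Φfull : X → Matrix d d ℂ) (n : ℕ) :
    (Fin n → X) → Matrix (Fin n → d) (Fin n → d) ℂ :=
  fun xs => Matrix.of fun i j =>
    (∏ b : Fin (n / M), Φ₂M (fun m => xs (grpIdx b m)) (fun m => i (grpIdx b m))
        (fun m => j (grpIdx b m))) *
    (∏ k : Fin (n % M), Φfull (xs (remIdx k)) (i (remIdx k)) (j (remIdx k)))

/-!
Reweight a test `(p, {T_x})` to the pair `(p, {p(x) T_x})`. In these coordinates the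
feasible tests form a compact convex set on which both the type-I constraint and the
type-II error against `Ψ` are linear: the latter is the bilinear pairing
`∑ₓ Re Tr(Aₓ Ψₓ)`. Sion's minimax theorem for this pairing on the reweighted tests and the
compact convex set `𝓕` exchanges the infimum over tests with the supremum over `𝓕`.
-/

open scoped MatrixOrder

lemma bddBelow_image_sSup_image {α β : Type*} {f : α → β → ℝ} {s : Set α} {t : Set β}
    (ht : t.Nonempty) (habove : ∀ a ∈ s, BddAbove (f a '' t))
    (hbelow : ∀ b ∈ t, BddBelow ((f · b) '' s)) :
    BddBelow ((fun a => sSup (f a '' t)) '' s) := by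
  obtain ⟨b, hb⟩ := ht
  obtain ⟨m, hm⟩ := hbelow b hb
  refine ⟨m, Set.forall_mem_image.2 fun a ha => ?_⟩
  exact (hm ⟨a, ha, rfl⟩).trans (le_csSup (habove a ha) ⟨b, hb, rfl⟩)

lemma bddAbove_image_sInf_image {α β : Type*} {f : α → β → ℝ} {s : Set α} {t : Set β}
    (hs : s.Nonempty) (habove : ∀ a ∈ s, BddAbove (f a '' t))
    (hbelow : ∀ b ∈ t, BddBelow ((f · b) '' s)) :
    BddAbove ((fun b => sInf ((f · b) '' s)) '' t) := by
  obtain ⟨a, ha⟩ := hs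
  obtain ⟨m, hm⟩ := habove a ha
  refine ⟨m, Set.forall_mem_image.2 fun b hb => ?_⟩
  exact (csInf_le (hbelow b hb) ⟨a, ha, rfl⟩).trans (hm ⟨b, hb, rfl⟩)

section MatrixOrder

variable [Fintype d] [DecidableEq d]

instance : OrderClosedTopology (Matrix d d ℂ) := by
  open scoped Matrix.Norms.L2Operator in
  infer_instance

lemma isCompact_Icc_zero_one_matrix :
    IsCompact (Set.Icc (0 : Matrix d d ℂ) 1) := by
  open scoped Matrix.Norms.L2Operator in
  exact Metric.isCompact_of_isClosed_isBounded isClosed_Icc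
    (isBounded_iff_forall_norm_le.2 ⟨‖(1 : Matrix d d ℂ)‖, fun _ hT =>
      CStarAlgebra.norm_le_norm_of_nonneg_of_le hT.1 hT.2⟩)

lemma isPOVMElem_iff {T : Matrix d d ℂ} :
    IsPOVMElem T ↔ 0 ≤ T ∧ T ≤ 1 := by
  rw [IsPOVMElem, Matrix.nonneg_iff_posSemidef, Matrix.le_iff]

end MatrixOrder

section TracePairing

variable [Fintype X] [Fintype d]

def tracePairing : (X → Matrix d d ℂ) →ₗ[ℝ] (X → Matrix d d ℂ) →ₗ[ℝ] ℝ :=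
  LinearMap.mk₂ ℝ (fun A B => ∑ x, (A x * B x).trace.re)
    (fun A A' B => by simp [add_mul, Finset.sum_add_distrib])
    (fun c A B => by simp [Finset.mul_sum])
    (fun A B B' => by simp [mul_add, Finset.sum_add_distrib])
    (fun c A B => by simp [Finset.mul_sum])

lemma tracePairing_apply (A B : X → Matrix d d ℂ) :
    tracePairing A B = ∑ x, (A x * B x).trace.re := rfl

lemma tracePairing_smul_left (p : X → ℝ) (T B : X → Matrix d d ℂ) :
    tracePairing (p • T) B = ∑ x, p x * (T x * B x).trace.re := by
  simp [tracePairing_apply]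

lemma continuous_tracePairing_left (B : X → Matrix d d ℂ) :
    Continuous fun A => tracePairing A B := by
  simp only [tracePairing_apply]
  fun_prop

lemma continuous_tracePairing (A : X → Matrix d d ℂ) : Continuous fun B => tracePairing A B := by
  simp only [tracePairing_apply]
  fun_prop

end TracePairing

section WeightedTests

variable [Fintype X] [Fintype d] [DecidableEq d]

/-- Tests `(p, {T_x})` in the coordinates `(p, {p(x) T_x})`. -/
def weightedTests (ε : ℝ) (Φ : X → Matrix d d ℂ) : Set ((X → ℝ) × (X → Matrix d d ℂ)) :=
  {q | q.1 ∈ stdSimplex ℝ X ∧ (∀ x, 0 ≤ q.2 x ∧ q.2 x ≤ q.1 x • 1) ∧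
    tracePairing (q.1 • (1 : X → Matrix d d ℂ) - q.2) Φ ≤ ε}

lemma typeIErrVal_eq_tracePairing (Φ : X → Matrix d d ℂ) (p : X → ℝ) (T : X → Matrix d d ℂ) :
    typeIErrVal Φ p T = tracePairing (p • 1 - p • T) Φ := by
  rw [← smul_sub, tracePairing_smul_left]
  rfl

lemma mem_weightedTests_iff {ε : ℝ} {Φ : X → Matrix d d ℂ} {p : X → ℝ} {A : X → Matrix d d ℂ} :
    (p, A) ∈ weightedTests ε Φ ↔
      ∃ T, IsProbDist p ∧ (∀ x, IsPOVMElem (T x)) ∧ typeIErrVal Φ p T ≤ ε ∧ p • T = A := by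
  constructor
  · rintro ⟨hp, hA, hI⟩
    -- `T := p⁻¹ • A` works also where `p x = 0`: there `A x = 0`, and `0⁻¹ = 0`
    have hA_eq_zero : ∀ x, p x = 0 → A x = 0 := fun x hx =>
      le_antisymm (by simpa [hx] using (hA x).2) (hA x).1
    have hpA : p • p⁻¹ • A = A := funext fun x => by
      by_cases hx : p x = 0
      · simp [hx, hA_eq_zero]
      · simp [smul_smul, hx]
    refine ⟨p⁻¹ • A, hp, fun x => isPOVMElem_iff.2 ?_, ?_, hpA⟩
    · by_cases hx : p x = 0
      · simp [hx, zero_le_one]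
      refine ⟨smul_nonneg (inv_nonneg.2 (hp.1 x)) (hA x).1, ?_⟩
      calc (p x)⁻¹ • A x ≤ (p x)⁻¹ • p x • (1 : Matrix d d ℂ) :=
            smul_le_smul_of_nonneg_left (hA x).2 (inv_nonneg.2 (hp.1 x))
        _ = 1 := by rw [smul_smul, inv_mul_cancel₀ hx, one_smul]
    · rwa [typeIErrVal_eq_tracePairing, hpA]
  · rintro ⟨T, hp, hT, hI, rfl⟩
    refine ⟨hp, fun x => ?_, by rwa [← typeIErrVal_eq_tracePairing]⟩
    obtain ⟨hT0, hT1⟩ := isPOVMElem_iff.1 (hT x)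
    exact ⟨smul_nonneg (hp.1 x) hT0, smul_le_smul_of_nonneg_left hT1 (hp.1 x)⟩

lemma weightedTests_nonempty [Nonempty X] {ε : ℝ} (hε : 0 ≤ ε) (Φ : X → Matrix d d ℂ) :
    (weightedTests ε Φ).Nonempty := by
  let x₀ : X := Classical.arbitrary X
  refine ⟨(Pi.single x₀ 1, Pi.single x₀ 1 • 1), mem_weightedTests_iff.2
    ⟨1, single_mem_stdSimplex ℝ x₀, fun _ => isPOVMElem_iff.2 ⟨zero_le_one, le_rfl⟩, ?_, rfl⟩⟩
  simpa [typeIErrVal] using hε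

lemma convex_weightedTests (ε : ℝ) (Φ : X → Matrix d d ℂ) : Convex ℝ (weightedTests ε Φ) := by
  rintro ⟨p, A⟩ ⟨hp, hA, hI⟩ ⟨p', A'⟩ ⟨hp', hA', hI'⟩ a b ha hb hab
  refine ⟨convex_stdSimplex ℝ X hp hp' ha hb hab, fun x => ⟨?_, ?_⟩, ?_⟩
  · exact add_nonneg (smul_nonneg ha (hA x).1) (smul_nonneg hb (hA' x).1)
  · simp only [Prod.smul_mk, Prod.mk_add_mk, Pi.add_apply, Pi.smul_apply, smul_eq_mul,
      add_smul, mul_smul]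
    exact add_le_add (smul_le_smul_of_nonneg_left (hA x).2 ha)
      (smul_le_smul_of_nonneg_left (hA' x).2 hb)
  · have hsplit : (a • p + b • p') • (1 : X → Matrix d d ℂ) - (a • A + b • A') =
        a • (p • 1 - A) + b • (p' • 1 - A') := by
      ext x : 1
      simp only [Pi.sub_apply, Pi.add_apply, Pi.smul_apply, Pi.smul_apply', Pi.one_apply]
      module
    simp only [Prod.smul_mk, Prod.mk_add_mk, hsplit, map_add, map_smul, LinearMap.add_apply,
      LinearMap.smul_apply, smul_eq_mul]
    calc a * tracePairing (p • 1 - A) Φ + b * tracePairing (p' • 1 - A') Φ ≤ a * ε + b * ε :=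
          add_le_add (mul_le_mul_of_nonneg_left hI ha) (mul_le_mul_of_nonneg_left hI' hb)
      _ = ε := by rw [← add_mul, hab, one_mul]

lemma isCompact_weightedTests (ε : ℝ) (Φ : X → Matrix d d ℂ) :
    IsCompact (weightedTests ε Φ) := by
  have hclosed : IsClosed (weightedTests ε Φ) := by
    simp only [weightedTests, Set.ofPred_and, Set.ofPred_forall]
    refine ((isClosed_stdSimplex ℝ X).preimage continuous_fst).inter
      ((isClosed_iInter fun x => ?_).inter ?_)
    · exact (isClosed_le continuous_const (by fun_prop)).inter
        (isClosed_le (by fun_prop) (by fun_prop))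
    · exact isClosed_le ((continuous_tracePairing_left Φ).comp (by fun_prop)) continuous_const
  refine ((isCompact_univ_pi fun _ => isCompact_Icc (a := (0 : ℝ)) (b := 1)).prod
    (isCompact_univ_pi fun _ => isCompact_Icc_zero_one_matrix)).of_isClosed_subset hclosed ?_
  rintro ⟨p, A⟩ ⟨hp, hA, -⟩
  have hp1 : ∀ x, p x ≤ 1 := fun x => by
    simpa [hp.2] using Finset.single_le_sum (fun y _ => hp.1 y) (Finset.mem_univ x)
  refine ⟨fun x _ => ⟨hp.1 x, hp1 x⟩, fun x _ => ⟨(hA x).1, (hA x).2.trans ?_⟩⟩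
  simpa using smul_le_smul_of_nonneg_right (hp1 x) (zero_le_one : (0 : Matrix d d ℂ) ≤ 1)

lemma setOf_tests_eq_image (ε : ℝ) (Φ : X → Matrix d d ℂ) (g : (X → Matrix d d ℂ) → ℝ) :
    {v | ∃ p T, IsProbDist p ∧ (∀ x, IsPOVMElem (T x)) ∧ typeIErrVal Φ p T ≤ ε ∧
      v = g (p • T)} = (fun q => g q.2) '' weightedTests ε Φ := by
  ext v
  constructor
  · rintro ⟨p, T, hp, hT, hI, rfl⟩
    exact ⟨(p, p • T), mem_weightedTests_iff.2 ⟨T, hp, hT, hI, rfl⟩, rfl⟩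
  · rintro ⟨⟨p, A⟩, hq, rfl⟩
    obtain ⟨T, hp, hT, hI, rfl⟩ := mem_weightedTests_iff.1 hq
    exact ⟨p, T, hp, hT, hI, rfl⟩

lemma typeIIErr_eq_sInf_image (ε : ℝ) (Φ₁ Φ₂ : X → Matrix d d ℂ) :
    typeIIErr ε Φ₁ Φ₂ = sInf ((fun q => tracePairing q.2 Φ₂) '' weightedTests ε Φ₁) := by
  simp_rw [typeIIErr, ← tracePairing_smul_left]
  exact congrArg sInf (setOf_tests_eq_image ε Φ₁ fun A => tracePairing A Φ₂)

lemma typeIIErrSet_eq_sInf_image (ε : ℝ) (Φ : X → Matrix d d ℂ) (S : Set (X → Matrix d d ℂ)) :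
    typeIIErrSet ε Φ S =
      sInf ((fun q => sSup (tracePairing q.2 '' S)) '' weightedTests ε Φ) := by
  have himage : ∀ A, {w | ∃ Φf ∈ S, w = tracePairing A Φf} = tracePairing A '' S := fun A => by
    ext; simp [eq_comm]
  simp_rw [typeIIErrSet, ← tracePairing_smul_left, himage]
  exact congrArg sInf (setOf_tests_eq_image ε Φ fun A => sSup (tracePairing A '' S))

end WeightedTests

theorem minimax_characterization_of_typeII_errors_general
    {X d : Type*} [Fintype X] [Nonempty X] [Fintype d] [DecidableEq d]
    (ε : ℝ) (hε : 0 ≤ ε)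
    (S : Set (X → Matrix d d ℂ))
    (hne : S.Nonempty) (hcomp : IsCompact S) (hconv : Convex ℝ S)
    (Φ : X → Matrix d d ℂ) :
    typeIIErrSet ε Φ S = sSup { w : ℝ | ∃ Φf ∈ S, w = typeIIErr ε Φ Φf } := by
  set K := weightedTests ε Φ
  have hK : K.Nonempty := weightedTests_nonempty hε Φ
  have hKcomp : IsCompact K := isCompact_weightedTests ε Φ
  have hKconv : Convex ℝ K := convex_weightedTests ε Φ
  have hleft : ∀ Ψ, Continuous fun q : (X → ℝ) × (X → Matrix d d ℂ) => tracePairing q.2 Ψ :=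
    fun Ψ => (continuous_tracePairing_left Ψ).comp continuous_snd
  have habove : ∀ q ∈ K, BddAbove (tracePairing q.2 '' S) := fun q _ =>
    (hcomp.image (continuous_tracePairing q.2)).bddAbove
  have hbelow : ∀ Ψ ∈ S, BddBelow ((tracePairing ·.2 Ψ) '' K) := fun Ψ _ =>
    (hKcomp.image (hleft Ψ)).bddBelow
  have hRHS : { w : ℝ | ∃ Φf ∈ S, w = typeIIErr ε Φ Φf } = typeIIErr ε Φ '' S := by
    ext; simp [eq_comm]
  refine Sion.minimax (f := fun (q : (X → ℝ) × (X → Matrix d d ℂ)) Ψ => tracePairing q.2 Ψ)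
    hK hKcomp
    (fun Ψ _ => (hleft Ψ).lowerSemicontinuous.lowerSemicontinuousOn _)
    (fun Ψ _ => ((tracePairing.flip Ψ ∘ₗ LinearMap.snd ℝ _ _).convexOn hKconv).quasiconvexOn)
    hconv
    (fun q _ => (continuous_tracePairing q.2).upperSemicontinuous.upperSemicontinuousOn _)
    (fun q _ => ((tracePairing q.2).concaveOn hconv).quasiconcaveOn) hKconv
    _ (fun q hq => isLUB_csSup (hne.image _) (habove q hq)) _ ?_
    (typeIIErr ε Φ) (fun Ψ _ => ?_) _ ?_
  · rw [typeIIErrSet_eq_sInf_image]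
    exact isGLB_csInf (hK.image _) (bddBelow_image_sSup_image hne habove hbelow)
  · rw [typeIIErr_eq_sInf_image]
    exact (hKcomp.image (hleft Ψ)).isGLB_sInf (hK.image _)
  · simp_rw [hRHS, typeIIErr_eq_sInf_image]
    exact isLUB_csSup (hne.image _) (bddAbove_image_sInf_image hK habove hbelow)

/-- **Minimax characterization of type II errors for CQ channels** (Proposition 3.2): for
`ε ≥ 0`, a (nonempty) compact convex set `𝓕` of free CQ channels, and a CQ channel `Φ`,
`β_ε(Φ‖𝓕) = max_{Φ_free ∈ 𝓕} β_ε(Φ‖Φ_free)`. -/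
theorem minimax_characterization_of_typeII_errors
    {X d : Type*} [Fintype X] [Nonempty X] [Fintype d] [DecidableEq d]
    (ε : ℝ) (hε : 0 ≤ ε)
    (S : Set (X → Matrix d d ℂ)) (hS : ∀ Φf ∈ S, IsCQChannel Φf)
    (hne : S.Nonempty) (hcomp : IsCompact S) (hconv : Convex ℝ S)
    (Φ : X → Matrix d d ℂ) (hΦ : IsCQChannel Φ) :
    typeIIErrSet ε Φ S = sSup { w : ℝ | ∃ Φf ∈ S, w = typeIIErr ε Φ Φf } :=
  minimax_characterization_of_typeII_errors_general ε hε S hne hcomp hconv Φ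

end CQ
end
end

section
/- Monotonicity of type II errors for CQ channels under superchannels: For any parameter ε ≥ 0, any CQ channels Φ1, Φ2 : X_in × X_aux → D(H_in ⊗ H_aux), and any superchannel Θ converting CQ channels from X_in → D(H_in) into CQ channels from X_out → D(H_out), it holds that β_ε((Θ⊗id)[Φ1] ‖ (Θ⊗id)[Φ2]) ≥ β_ε(Φ1‖Φ2). -/
open scoped Kronecker
open Filter Matrix
open scoped ComplexOrder

attribute [local instance] Classical.propDecidable

noncomputable section

namespace CQ

variable {X d : Type*}

/-! A superchannel can be run backwards on tests. Given a test `(r, S)` for the processed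
channels, weight the inputs by `q (x_in, x_aux) = ∑ x_out, r (x_out, x_aux) p_Θ (x_in | x_out)` and
let `q • T = ∑ x_out, r p_Θ (N_{x_in,x_out} ⊗ id)† S`, with `†` the adjoint for the trace pairing.
Since `N` is CPTP, its adjoint is positive and unital, so `(q, T)` is again a test; by duality it
has the same type-I error on `Φ₁` and the same type-II error on `Φ₂` as `(r, S)` has on the
processed channels. So every value in the infimum defining the right-hand side also occurs in the
infimum on the left. -/

open scoped MatrixOrder

theorem _root_.Matrix.PosSemidef.trace_mul_nonneg {n : Type*} [Fintype n] {A B : Matrix n n ℂ}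
    (hA : A.PosSemidef) (hB : B.PosSemidef) : 0 ≤ (A * B).trace := by
  have hsqrt : CFC.sqrt A * B * CFC.sqrt A = CFC.sqrt A * B * star (CFC.sqrt A) := by
    rw [(CFC.sqrt_nonneg A).isSelfAdjoint.star_eq]
  rw [← CFC.sqrt_mul_sqrt_self A hA.nonneg, mul_assoc, trace_mul_comm, hsqrt]
  exact (star_right_conjugate_nonneg hB.nonneg _).posSemidef.trace_nonneg

section TraceDual

variable {m n R : Type*} [DecidableEq m] [Fintype n] [CommSemiring R]

/-- The adjoint of `L` for the pairing `⟪T, M⟫ = Tr (T * M)`, see `trace_traceDual_mul`. -/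
def traceDual (L : Matrix m m R →ₗ[R] Matrix n n R) : Matrix n n R →ₗ[R] Matrix m m R where
  toFun T := of fun i j => (T * L (single j i 1)).trace
  map_add' T S := by ext; simp [add_mul]
  map_smul' c T := by ext; simp

theorem trace_traceDual_mul [Fintype m] (L : Matrix m m R →ₗ[R] Matrix n n R)
    (T : Matrix n n R) (M : Matrix m m R) : (traceDual L T * M).trace = (T * L M).trace := by
  induction M using Matrix.induction_on' with
  | h_zero => simp
  | h_add M M' hM hM' => rw [mul_add, trace_add, hM, hM', map_add, mul_add, trace_add]
  | h_std_basis i j a =>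
    rw [trace_mul_single, ← mul_one a, ← smul_eq_mul, ← smul_single, map_smul, mul_smul_comm,
      trace_smul]
    simp [traceDual, mul_comm]

theorem traceDual_one [Fintype m] [DecidableEq n] {L : Matrix m m R →ₗ[R] Matrix n n R}
    (hL : ∀ M, (L M).trace = M.trace) : traceDual L 1 = 1 :=
  ext_iff_trace_mul_right.mpr fun M => by rw [trace_traceDual_mul, one_mul, one_mul, hL]

theorem posSemidef_traceDual [Fintype m] {L : Matrix m m ℂ →ₗ[ℂ] Matrix n n ℂ}
    (hL : ∀ M, M.PosSemidef → (L M).PosSemidef) {T : Matrix n n ℂ} (hT : T.PosSemidef) :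
    (traceDual L T).PosSemidef := by
  let Lₚ : Matrix m m ℂ →ₚ[ℂ] Matrix n n ℂ :=
    PositiveLinearMap.mk₀ L fun M hM => (hL M hM.posSemidef).nonneg
  have hstar (M : Matrix m m ℂ) : L Mᴴ = (L M)ᴴ := map_star Lₚ M
  have herm : (traceDual L T).IsHermitian := ext_iff_trace_mul_right.mpr fun M => by
    calc ((traceDual L T)ᴴ * M).trace = star (traceDual L T * Mᴴ).trace := by
          rw [← trace_conjTranspose, conjTranspose_mul, conjTranspose_conjTranspose,
            trace_mul_comm]
      _ = star (T * (L M)ᴴ).trace := by rw [trace_traceDual_mul, hstar]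
      _ = (traceDual L T * M).trace := by
          rw [← trace_conjTranspose, conjTranspose_mul, conjTranspose_conjTranspose, hT.1.eq,
            trace_mul_comm, trace_traceDual_mul]
  refine .of_dotProduct_mulVec_nonneg herm fun x => ?_
  rw [dotProduct_comm, ← trace_vecMulVec, ← mul_vecMulVec, trace_traceDual_mul]
  exact hT.trace_mul_nonneg (hL _ (posSemidef_vecMulVec_self_star x))

end TraceDual

section TensorId

variable {din dout : Type*}

def tensorIdLin (N : Matrix din din ℂ →ₗ[ℂ] Matrix dout dout ℂ) (k : Type*) :
    Matrix (din × k) (din × k) ℂ →ₗ[ℂ] Matrix (dout × k) (dout × k) ℂ where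
  toFun := tensorIdMap N k
  map_add' M M' := by
    ext a b
    change N (of (fun i j => M (i, a.2) (j, b.2)) + of fun i j => M' (i, a.2) (j, b.2)) a.1 b.1
      = _
    rw [map_add]
    rfl
  map_smul' c M := by
    ext a b
    change N (c • of fun i j => M (i, a.2) (j, b.2)) a.1 b.1 = _
    rw [map_smul]
    rfl

variable {k : Type*} [Fintype din] [Fintype dout] [Fintype k]
  {N : Matrix din din ℂ →ₗ[ℂ] Matrix dout dout ℂ}

theorem IsCPTP.posSemidef_tensorIdMap (hN : IsCPTP N) {M : Matrix (din × k) (din × k) ℂ}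
    (hM : M.PosSemidef) : (tensorIdMap N k M).PosSemidef := by
  let e := Equiv.prodCongr (Equiv.refl din) (Fintype.equivFin k)
  let e' := Equiv.prodCongr (Equiv.refl dout) (Fintype.equivFin k)
  exact (posSemidef_submatrix_equiv e'.symm).mp (hN.1 _ _ (hM.submatrix e.symm))

theorem trace_tensorIdMap (hN : ∀ M, (N M).trace = M.trace) (M : Matrix (din × k) (din × k) ℂ) :
    (tensorIdMap N k M).trace = M.trace := by
  simp only [trace, diag, Fintype.sum_prod_type_right]
  exact Finset.sum_congr rfl fun c _ => hN (of fun i j => M (i, c) (j, c))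

end TensorId

theorem sum_mul_re_trace_of_smul_eq {ι n : Type*} [Fintype ι] [Fintype n] {q : ι → ℝ}
    {T W Φ : ι → Matrix n n ℂ} (h : ∀ i, (q i : ℂ) • T i = W i) :
    ∑ i, q i * (T i * Φ i).trace.re = (∑ i, (W i * Φ i).trace).re := by
  simp only [Complex.re_sum, ← h, smul_mul, trace_smul, smul_eq_mul, Complex.re_ofReal_mul]

section Pullback

variable {Xin Xout Xaux din dout daux : Type*} [Fintype Xout] [DecidableEq din] [Fintype dout]
  [Fintype daux] [DecidableEq daux]
  {p : Xout → Xin → ℝ} {N : Xin → Xout → Matrix din din ℂ →ₗ[ℂ] Matrix dout dout ℂ}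
  {r : Xout × Xaux → ℝ}

def pullbackProb (p : Xout → Xin → ℝ) (r : Xout × Xaux → ℝ) (x : Xin × Xaux) : ℝ :=
  ∑ xo, r (xo, x.2) * p xo x.1

def pullbackOp (p : Xout → Xin → ℝ)
    (N : Xin → Xout → Matrix din din ℂ →ₗ[ℂ] Matrix dout dout ℂ) (r : Xout × Xaux → ℝ)
    (S : Xout × Xaux → Matrix (dout × daux) (dout × daux) ℂ) (x : Xin × Xaux) :
    Matrix (din × daux) (din × daux) ℂ :=
  ∑ xo, ((r (xo, x.2) * p xo x.1 : ℝ) : ℂ) •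
    traceDual (tensorIdLin (N x.1 xo) daux) (S (xo, x.2))

/-- Where `pullbackProb p r x = 0` every term of `pullbackOp` vanishes as well, so the junk value
`0⁻¹ = 0` is harmless (`pullbackProb_smul_pullbackTest`). -/
def pullbackTest (p : Xout → Xin → ℝ)
    (N : Xin → Xout → Matrix din din ℂ →ₗ[ℂ] Matrix dout dout ℂ) (r : Xout × Xaux → ℝ)
    (S : Xout × Xaux → Matrix (dout × daux) (dout × daux) ℂ) (x : Xin × Xaux) :
    Matrix (din × daux) (din × daux) ℂ :=
  ((pullbackProb p r x : ℂ))⁻¹ • pullbackOp p N r S x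

theorem pullbackProb_nonneg (hp : 0 ≤ p) (hr : 0 ≤ r) (x : Xin × Xaux) :
    0 ≤ pullbackProb p r x :=
  Finset.sum_nonneg fun xo _ => mul_nonneg (hr _) (hp xo _)

theorem isProbDist_pullbackProb [Fintype Xin] [Fintype Xaux] (hp : ∀ xo, IsProbDist (p xo))
    (hr : IsProbDist r) : IsProbDist (pullbackProb p r) := by
  refine ⟨pullbackProb_nonneg (fun xo => (hp xo).1) hr.1, ?_⟩
  calc ∑ x : Xin × Xaux, pullbackProb p r x
      = ∑ y : Xout × Xaux, r y * ∑ xi, p y.1 xi := by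
        simp only [pullbackProb, Finset.mul_sum]
        rw [Fintype.sum_prod_type_right, Fintype.sum_prod_type_right]
        exact Finset.sum_congr rfl fun xa _ => Finset.sum_comm
    _ = 1 := by simp only [(hp _).2, mul_one, hr.2]

theorem sum_trace_pullbackOp_mul [Fintype Xin] [Fintype Xaux] [Fintype din]
    (S : Xout × Xaux → Matrix (dout × daux) (dout × daux) ℂ)
    (Φ : Xin × Xaux → Matrix (din × daux) (din × daux) ℂ) :
    ∑ x, (pullbackOp p N r S x * Φ x).trace = ∑ y, r y * (S y * superAct p N Φ y).trace := by
  simp only [pullbackOp, superAct, Matrix.sum_mul, trace_sum, smul_mul, trace_smul,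
    trace_traceDual_mul, Finset.mul_sum]
  rw [Fintype.sum_prod_type_right, Fintype.sum_prod_type_right]
  refine Finset.sum_congr rfl fun xa _ => Finset.sum_comm.trans <|
    Finset.sum_congr rfl fun xo _ => Finset.sum_congr rfl fun xi _ => ?_
  rw [mul_smul_comm, trace_smul, Complex.real_smul, smul_eq_mul, Complex.ofReal_mul, mul_assoc]
  rfl

theorem pullbackOp_one_sub [Fintype din] [DecidableEq dout] (hN : ∀ xi xo, IsCPTP (N xi xo))
    (S : Xout × Xaux → Matrix (dout × daux) (dout × daux) ℂ) (x : Xin × Xaux) :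
    pullbackOp p N r (fun y => 1 - S y) x
      = (pullbackProb p r x : ℂ) • 1 - pullbackOp p N r S x := by
  have hunital (xo : Xout) : traceDual (tensorIdLin (N x.1 xo) daux) 1 = 1 :=
    traceDual_one fun M => trace_tensorIdMap (hN x.1 xo).2 M
  simp only [pullbackOp, pullbackProb, map_sub, hunital, smul_sub, Finset.sum_sub_distrib]
  rw [Complex.ofReal_sum, Finset.sum_smul]

theorem posSemidef_pullbackOp [Fintype din] (hp : 0 ≤ p) (hr : 0 ≤ r)
    (hN : ∀ xi xo, IsCPTP (N xi xo)) {S : Xout × Xaux → Matrix (dout × daux) (dout × daux) ℂ}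
    (hS : ∀ y, (S y).PosSemidef) (x : Xin × Xaux) : (pullbackOp p N r S x).PosSemidef :=
  posSemidef_sum _ fun xo _ =>
    (posSemidef_traceDual (fun _ => (hN x.1 xo).posSemidef_tensorIdMap) (hS _)).smul
      (Complex.zero_le_real.mpr (mul_nonneg (hr _) (hp xo _)))

theorem pullbackProb_smul_pullbackTest (hp : 0 ≤ p) (hr : 0 ≤ r)
    (S : Xout × Xaux → Matrix (dout × daux) (dout × daux) ℂ) (x : Xin × Xaux) :
    (pullbackProb p r x : ℂ) • pullbackTest p N r S x = pullbackOp p N r S x := by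
  by_cases hx : pullbackProb p r x = 0
  · have hterms := (Finset.sum_eq_zero_iff_of_nonneg fun xo _ =>
      mul_nonneg (hr (xo, x.2)) (hp xo x.1)).mp hx
    simp [pullbackOp, hx, hterms]
  · rw [pullbackTest, smul_smul, mul_inv_cancel₀ (Complex.ofReal_ne_zero.mpr hx), one_smul]

theorem isPOVMElem_pullbackTest [Fintype din] [DecidableEq dout] (hp : 0 ≤ p) (hr : 0 ≤ r)
    (hN : ∀ xi xo, IsCPTP (N xi xo))
    {S : Xout × Xaux → Matrix (dout × daux) (dout × daux) ℂ} (hS : ∀ y, IsPOVMElem (S y))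
    (x : Xin × Xaux) : IsPOVMElem (pullbackTest p N r S x) := by
  by_cases hx : pullbackProb p r x = 0
  · simp [pullbackTest, hx, IsPOVMElem, PosSemidef.zero, PosSemidef.one]
  have hinv : (0 : ℂ) ≤ ((pullbackProb p r x : ℂ))⁻¹ :=
    inv_nonneg.mpr (Complex.zero_le_real.mpr (pullbackProb_nonneg hp hr x))
  have hcompl : 1 - pullbackTest p N r S x
      = ((pullbackProb p r x : ℂ))⁻¹ • pullbackOp p N r (fun y => 1 - S y) x := by
    rw [pullbackOp_one_sub hN, smul_sub, smul_smul,
      inv_mul_cancel₀ (Complex.ofReal_ne_zero.mpr hx), one_smul, pullbackTest]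
  refine ⟨(posSemidef_pullbackOp hp hr hN (fun y => (hS y).1) x).smul hinv, ?_⟩
  rw [hcompl]
  exact (posSemidef_pullbackOp hp hr hN (fun y => (hS y).2) x).smul hinv

theorem sum_mul_re_trace_pullbackTest [Fintype Xin] [Fintype Xaux] [Fintype din]
    (hp : 0 ≤ p) (hr : 0 ≤ r) (S : Xout × Xaux → Matrix (dout × daux) (dout × daux) ℂ)
    (Φ : Xin × Xaux → Matrix (din × daux) (din × daux) ℂ) :
    ∑ x, pullbackProb p r x * (pullbackTest p N r S x * Φ x).trace.re
      = ∑ y, r y * (S y * superAct p N Φ y).trace.re := by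
  rw [sum_mul_re_trace_of_smul_eq (pullbackProb_smul_pullbackTest hp hr S),
    sum_trace_pullbackOp_mul, Complex.re_sum]
  simp only [Complex.re_ofReal_mul]

theorem typeIErrVal_pullbackTest [Fintype Xin] [Fintype Xaux] [Fintype din] [DecidableEq dout]
    (hp : 0 ≤ p) (hr : 0 ≤ r) (hN : ∀ xi xo, IsCPTP (N xi xo))
    (S : Xout × Xaux → Matrix (dout × daux) (dout × daux) ℂ)
    (Φ : Xin × Xaux → Matrix (din × daux) (din × daux) ℂ) :
    typeIErrVal Φ (pullbackProb p r) (pullbackTest p N r S) = typeIErrVal (superAct p N Φ) r S := by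
  have hcompl (x : Xin × Xaux) : (pullbackProb p r x : ℂ) • (1 - pullbackTest p N r S x)
      = pullbackOp p N r (fun y => 1 - S y) x := by
    rw [smul_sub, pullbackProb_smul_pullbackTest hp hr, pullbackOp_one_sub hN]
  rw [typeIErrVal, sum_mul_re_trace_of_smul_eq hcompl, sum_trace_pullbackOp_mul, Complex.re_sum,
    typeIErrVal]
  simp only [Complex.re_ofReal_mul]

end Pullback

section Simulation

variable {Y e : Type*} [Fintype X] [Fintype Y] [Fintype d] [DecidableEq d] [Fintype e]
  [DecidableEq e]

theorem isProbDist_uniform [Nonempty Y] : IsProbDist fun _ : Y => (Fintype.card Y : ℝ)⁻¹ :=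
  ⟨fun _ => by positivity, by simp⟩

theorem typeIIErr_le_of_forall_test [Nonempty Y] {ε : ℝ} (hε : 0 ≤ ε)
    {Φ₁ Φ₂ : X → Matrix d d ℂ} {Ψ₁ Ψ₂ : Y → Matrix e e ℂ} (hΦ₂ : ∀ x, (Φ₂ x).PosSemidef)
    (h : ∀ r S, IsProbDist r → (∀ y, IsPOVMElem (S y)) →
      ∃ q T, IsProbDist q ∧ (∀ x, IsPOVMElem (T x)) ∧
        typeIErrVal Φ₁ q T ≤ typeIErrVal Ψ₁ r S ∧
        ∑ x, q x * (T x * Φ₂ x).trace.re ≤ ∑ y, r y * (S y * Ψ₂ y).trace.re) :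
    typeIIErr ε Φ₁ Φ₂ ≤ typeIIErr ε Ψ₁ Ψ₂ := by
  have hbdd : BddBelow { v | ∃ q T, IsProbDist q ∧ (∀ x, IsPOVMElem (T x)) ∧
      typeIErrVal Φ₁ q T ≤ ε ∧ v = ∑ x, q x * (T x * Φ₂ x).trace.re } := by
    refine ⟨0, ?_⟩
    rintro v ⟨q, T, hq, hT, -, rfl⟩
    exact Finset.sum_nonneg fun x _ =>
      mul_nonneg (hq.1 x) (Complex.nonneg_iff.mp ((hT x).1.trace_mul_nonneg (hΦ₂ x))).1
  have hone : IsPOVMElem (1 : Matrix e e ℂ) := ⟨PosSemidef.one, by simpa using PosSemidef.zero⟩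
  refine le_csInf ⟨_, _, fun _ => 1, isProbDist_uniform, fun _ => hone, ?_, rfl⟩ ?_
  · simpa [typeIErrVal] using hε
  · rintro v ⟨r, S, hr, hS, hI, rfl⟩
    obtain ⟨q, T, hq, hT, hI', hII⟩ := h r S hr hS
    exact (csInf_le hbdd ⟨q, T, hq, hT, hI'.trans hI, rfl⟩).trans hII

end Simulation

theorem monotonicity_of_typeII_errors_under_superchannels_general
    {Xin Xout Xaux din dout daux : Type*}
    [Fintype Xin] [Fintype Xout] [Nonempty Xout]
    [Fintype Xaux] [Nonempty Xaux]
    [Fintype din] [DecidableEq din] [Fintype dout] [DecidableEq dout]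
    [Fintype daux] [DecidableEq daux]
    (ε : ℝ) (hε : 0 ≤ ε)
    (Φ₁ Φ₂ : Xin × Xaux → Matrix (din × daux) (din × daux) ℂ)
    (hΦ₂ : IsCQChannel Φ₂)
    (p : Xout → Xin → ℝ) (hp : ∀ xo, IsProbDist (p xo))
    (N : Xin → Xout → Matrix din din ℂ →ₗ[ℂ] Matrix dout dout ℂ)
    (hN : ∀ xi xo, IsCPTP (N xi xo)) :
    typeIIErr ε Φ₁ Φ₂ ≤ typeIIErr ε (superAct p N Φ₁) (superAct p N Φ₂) := by
  have hp₀ : 0 ≤ p := fun xo => (hp xo).1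
  refine typeIIErr_le_of_forall_test hε (fun x => (hΦ₂ x).1) fun r S hr hS => ?_
  exact ⟨pullbackProb p r, pullbackTest p N r S, isProbDist_pullbackProb hp hr,
    isPOVMElem_pullbackTest hp₀ hr.1 hN hS, (typeIErrVal_pullbackTest hp₀ hr.1 hN S Φ₁).le,
    (sum_mul_re_trace_pullbackTest hp₀ hr.1 S Φ₂).le⟩

/-- **Monotonicity of type II errors for CQ channels under superchannels** (Lemma 3.3): for
`ε ≥ 0`, CQ channels `Φ₁, Φ₂ : X_in × X_aux → D(H_in ⊗ H_aux)`, and any superchannel `Θ`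
(given by a conditional probability `p_Θ(x_in|x_out)` and CPTP maps `N_{x_in,x_out}`),
`β_ε((Θ⊗id)[Φ₁]‖(Θ⊗id)[Φ₂]) ≥ β_ε(Φ₁‖Φ₂)`. -/
theorem monotonicity_of_typeII_errors_under_superchannels
    {Xin Xout Xaux din dout daux : Type*}
    [Fintype Xin] [Nonempty Xin] [Fintype Xout] [Nonempty Xout]
    [Fintype Xaux] [Nonempty Xaux]
    [Fintype din] [DecidableEq din] [Fintype dout] [DecidableEq dout]
    [Fintype daux] [DecidableEq daux]
    (ε : ℝ) (hε : 0 ≤ ε)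
    (Φ₁ Φ₂ : Xin × Xaux → Matrix (din × daux) (din × daux) ℂ)
    (hΦ₁ : IsCQChannel Φ₁) (hΦ₂ : IsCQChannel Φ₂)
    (p : Xout → Xin → ℝ) (hp : ∀ xo, IsProbDist (p xo))
    (N : Xin → Xout → Matrix din din ℂ →ₗ[ℂ] Matrix dout dout ℂ)
    (hN : ∀ xi xo, IsCPTP (N xi xo)) :
    typeIIErr ε Φ₁ Φ₂ ≤ typeIIErr ε (superAct p N Φ₁) (superAct p N Φ₂) :=
  monotonicity_of_typeII_errors_under_superchannels_general ε hε Φ₁ Φ₂ hΦ₂ p hp N hN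

end CQ
end
end

section
/- Bound on type II errors between CQ channels: For any parameters α > 1 and ε ∈ [0,1), and any CQ channels Φ1, Φ2 : X → D(H), it holds that −log β_ε(Φ1‖Φ2) ≤ D̃_α(Φ1‖Φ2) + (α/(α−1)) log(1/(1−ε)). -/
open scoped Kronecker
open Filter Matrix
open scoped ComplexOrder

attribute [local instance] Classical.propDecidable

noncomputable section

/-!
Fix a test `(p, {T_x})` with type-I error at most `ε` and put `q_x = Tr[T_x Φ₁(x)]`,
`r_x = Tr[T_x Φ₂(x)]`, `β = α/(α-1)`, `s = 1/(2β)`. For `ρ = Φ₁(x)`, `σ = Φ₂(x)` with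
`supp ρ ⊆ supp σ` (otherwise `D̃_α = ∞`) one has `Tr[Tρ] = Tr[(σ^s T σ^s)(σ^{-s} ρ σ^{-s})]`, so Hölder's inequality for Schatten norms together
with `Tr[(σ^s T σ^s)^β] = Tr[(T^{1/2} σ^{2s} T^{1/2})^β] ≤ Tr[σ T]` (valid as `0 ≤ T ≤ 1`) gives
the measured bound `q_x^α ≤ Q̃_α(Φ₁(x)‖Φ₂(x)) r_x^{α-1}`, i.e. `e^{-D} q_x^β ≤ r_x` with
`D = D̃_α(Φ₁‖Φ₂)`. Averaging over `p` and using convexity of `t ↦ t^β`,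
`Σ p_x r_x ≥ e^{-D} (Σ p_x q_x)^β ≥ e^{-D} (1-ε)^β`.

Both trace inequalities come from the Jensen inequality `⟨w, A w⟩^q ≤ ⟨w, A^q w⟩` for `A ≥ 0`,
`‖w‖ ≤ 1`, `q ≥ 1`, read off in an eigenbasis of `A`.
-/

open scoped MatrixOrder

lemma Real.rpow_sum_mul_le_sum_mul_rpow_of_sum_le_one {ι : Type*} (s : Finset ι) {q : ℝ}
    (hq : 1 ≤ q) {w x : ι → ℝ} (hw : ∀ i, 0 ≤ w i) (hw1 : ∑ i ∈ s, w i ≤ 1) (hx : ∀ i, 0 ≤ x i) :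
    (∑ i ∈ s, w i * x i) ^ q ≤ ∑ i ∈ s, w i * x i ^ q := by
  have hq0 : 0 < q := zero_lt_one.trans_le hq
  have hsum : 0 ≤ ∑ i ∈ s, w i * x i ^ q :=
    Finset.sum_nonneg fun i _ => mul_nonneg (hw i) (Real.rpow_nonneg (hx i) q)
  have hmass : (∑ i ∈ s, w i) ^ (1 - q⁻¹) ≤ 1 :=
    Real.rpow_le_one (Finset.sum_nonneg fun i _ => hw i) hw1
      (sub_nonneg.mpr (inv_le_one_of_one_le₀ hq))
  have hmean : ∑ i ∈ s, w i * x i ≤ (∑ i ∈ s, w i * x i ^ q) ^ q⁻¹ :=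
    (Real.inner_le_weight_mul_Lp_of_nonneg s hq w x hw hx).trans
      (mul_le_of_le_one_left (Real.rpow_nonneg hsum _) hmass)
  calc (∑ i ∈ s, w i * x i) ^ q ≤ ((∑ i ∈ s, w i * x i ^ q) ^ q⁻¹) ^ q :=
        Real.rpow_le_rpow (Finset.sum_nonneg fun i _ => mul_nonneg (hw i) (hx i)) hmean hq0.le
    _ = ∑ i ∈ s, w i * x i ^ q := Real.rpow_inv_rpow hsum hq0.ne'

lemma Real.exp_neg_mul_rpow_le_of_rpow_le {α D a b : ℝ} (hα : 1 < α) (ha : 0 ≤ a) (hb : 0 ≤ b)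
    (h : a ^ α ≤ Real.exp ((α - 1) * D) * b ^ (α - 1)) :
    Real.exp (-D) * a ^ (α / (α - 1)) ≤ b := by
  have hα1 : 0 < α - 1 := by linarith
  have h' := Real.rpow_le_rpow (Real.rpow_nonneg ha α) h (inv_nonneg.mpr hα1.le)
  rw [← Real.rpow_mul ha, ← div_eq_mul_inv, Real.mul_rpow (Real.exp_pos _).le
    (Real.rpow_nonneg hb _), ← Real.exp_mul, ← Real.rpow_mul hb, mul_inv_cancel₀ hα1.ne',
    Real.rpow_one, mul_comm (α - 1) D, mul_inv_cancel_right₀ hα1.ne'] at h'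
  rw [Real.exp_neg, inv_mul_le_iff₀ (Real.exp_pos D)]
  exact h'

namespace Matrix

variable {n 𝕜 : Type*} [RCLike 𝕜] [Fintype n]

lemma star_dotProduct_conjTranspose_mul_mul_mulVec {m : Type*} [Fintype m] (C : Matrix m n 𝕜)
    (Y : Matrix m m 𝕜) (v : n → 𝕜) :
    star v ⬝ᵥ (Cᴴ * Y * C) *ᵥ v = star (C *ᵥ v) ⬝ᵥ Y *ᵥ (C *ᵥ v) := by
  rw [← mulVec_mulVec, ← mulVec_mulVec, dotProduct_mulVec, ← star_mulVec]

variable [DecidableEq n] {A : Matrix n n 𝕜}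

lemma isHermitian_cfc (f : ℝ → ℝ) (A : Matrix n n 𝕜) : (cfc f A).IsHermitian :=
  cfc_predicate f A

lemma PosSemidef.cfc_mul_mul_cfc_same {ρ : Matrix n n 𝕜} (hρ : ρ.PosSemidef) (f : ℝ → ℝ)
    (σ : Matrix n n 𝕜) : (cfc f σ * ρ * cfc f σ).PosSemidef := by
  simpa only [(isHermitian_cfc f σ).eq] using hρ.conjTranspose_mul_mul_same (cfc f σ)

lemma IsHermitian.cfc_eq_mul_diagonal_mul (hA : A.IsHermitian) (f : ℝ → ℝ) :
    cfc f A = (hA.eigenvectorUnitary : Matrix n n 𝕜) *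
      diagonal (RCLike.ofReal ∘ f ∘ hA.eigenvalues) *
      star (hA.eigenvectorUnitary : Matrix n n 𝕜) := by
  rw [hA.cfc_eq, IsHermitian.cfc, Unitary.conjStarAlgAut_apply]

lemma IsHermitian.trace_cfc (hA : A.IsHermitian) (f : ℝ → ℝ) :
    (cfc f A).trace = ∑ i, (f (hA.eigenvalues i) : 𝕜) := by
  rw [hA.cfc_eq_mul_diagonal_mul, trace_mul_cycle, Unitary.coe_star_mul_self, one_mul,
    trace_diagonal]
  rfl

lemma PosSemidef.re_trace_cfc_rpow_nonneg (hA : A.PosSemidef) (r : ℝ) :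
    0 ≤ RCLike.re (cfc (fun t : ℝ => t ^ r) A).trace := by
  rw [hA.isHermitian.trace_cfc, map_sum]
  exact Finset.sum_nonneg fun i _ => by
    rw [RCLike.ofReal_re]; exact Real.rpow_nonneg (hA.eigenvalues_nonneg i) r

lemma PosSemidef.re_trace_mul_nonneg {B : Matrix n n 𝕜} (hA : A.PosSemidef) (hB : B.PosSemidef) :
    0 ≤ RCLike.re (A * B).trace := by
  have hS : (CFC.sqrt B).IsHermitian := (CFC.sqrt_nonneg B).posSemidef.isHermitian
  rw [← CFC.sqrt_mul_sqrt_self B hB.nonneg, ← mul_assoc, trace_mul_cycle]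
  have := hA.conjTranspose_mul_mul_same (CFC.sqrt B)
  rw [hS.eq] at this
  exact (RCLike.nonneg_iff.mp this.trace_nonneg).1

lemma trace_cfc_mul_conjTranspose (R : Matrix n n 𝕜) (f : ℝ → ℝ) :
    (cfc f (R * Rᴴ)).trace = (cfc f (Rᴴ * R)).trace := by
  have h₁ := (posSemidef_self_mul_conjTranspose R).isHermitian
  have h₂ := (posSemidef_conjTranspose_mul_self R).isHermitian
  rw [h₁.trace_cfc, h₂.trace_cfc,
    (h₁.eigenvalues_eq_eigenvalues_iff h₂).mpr (charpoly_mul_comm R Rᴴ)]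

lemma IsHermitian.re_dotProduct_cfc_mulVec (hA : A.IsHermitian) (f : ℝ → ℝ) (w : n → 𝕜) :
    RCLike.re (star w ⬝ᵥ cfc f A *ᵥ w) = ∑ i, f (hA.eigenvalues i) *
      ‖(star (hA.eigenvectorUnitary : Matrix n n 𝕜) *ᵥ w) i‖ ^ 2 := by
  set U : Matrix n n 𝕜 := ↑hA.eigenvectorUnitary
  have hU : star w ᵥ* U = star (star U *ᵥ w) := by
    rw [star_mulVec, star_eq_conjTranspose, conjTranspose_conjTranspose]
  rw [hA.cfc_eq_mul_diagonal_mul, ← mulVec_mulVec, ← mulVec_mulVec, dotProduct_mulVec, hU]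
  simp only [dotProduct, mulVec_diagonal, Pi.star_apply, map_sum, Function.comp_apply]
  refine Finset.sum_congr rfl fun i _ => ?_
  rw [mul_left_comm, RCLike.star_def, RCLike.conj_mul, ← RCLike.ofReal_pow, ← RCLike.ofReal_mul,
    RCLike.ofReal_re]

lemma IsHermitian.trace_eq_sum_dotProduct_eigenvectorBasis (hA : A.IsHermitian)
    (Y : Matrix n n 𝕜) :
    Y.trace = ∑ j, star ⇑(hA.eigenvectorBasis j) ⬝ᵥ Y *ᵥ ⇑(hA.eigenvectorBasis j) := by
  set U : Matrix n n 𝕜 := ↑hA.eigenvectorUnitary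
  have hconj : Y.trace = (star U * Y * U).trace := by
    rw [trace_mul_cycle, mem_unitaryGroup_iff.mp hA.eigenvectorUnitary.2, one_mul]
  rw [hconj, trace]
  refine Finset.sum_congr rfl fun j _ => ?_
  simp [U, mul_apply, dotProduct, mulVec, Finset.mul_sum, mul_assoc]

lemma IsHermitian.re_dotProduct_eigenvectorBasis (hA : A.IsHermitian) (j : n) :
    RCLike.re (star ⇑(hA.eigenvectorBasis j) ⬝ᵥ ⇑(hA.eigenvectorBasis j)) = 1 := by
  rw [dotProduct_comm, ← EuclideanSpace.inner_eq_star_dotProduct, inner_self_eq_norm_sq,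
    hA.eigenvectorBasis.orthonormal.1 j, one_pow]

lemma PosSemidef.re_dotProduct_mulVec_rpow_le (hA : A.PosSemidef) {q : ℝ} (hq : 1 ≤ q)
    {w : n → 𝕜} (hw : RCLike.re (star w ⬝ᵥ w) ≤ 1) :
    RCLike.re (star w ⬝ᵥ A *ᵥ w) ^ q ≤ RCLike.re (star w ⬝ᵥ cfc (fun t : ℝ => t ^ q) A *ᵥ w) := by
  have hH := hA.isHermitian
  have hid := hH.re_dotProduct_cfc_mulVec (fun t => t) w
  have hone := hH.re_dotProduct_cfc_mulVec (fun _ => 1) w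
  rw [show cfc (fun t : ℝ => t) A = A from cfc_id' ℝ A hH] at hid
  rw [cfc_const_one ℝ A, one_mulVec] at hone
  simp only [one_mul] at hone
  rw [hid, hH.re_dotProduct_cfc_mulVec]
  simp only [mul_comm _ (‖_‖ ^ 2)]
  exact Real.rpow_sum_mul_le_sum_mul_rpow_of_sum_le_one _ hq (fun i => sq_nonneg _) (hone ▸ hw)
    hA.eigenvalues_nonneg

lemma PosSemidef.re_trace_mul_le_Lp_mul_Lq {G : Matrix n n 𝕜} (hG : G.PosSemidef)
    (hA : A.PosSemidef) {p q : ℝ} (hpq : p.HolderConjugate q) :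
    RCLike.re (G * A).trace ≤ RCLike.re (cfc (fun t : ℝ => t ^ p) A).trace ^ (1 / p) *
      RCLike.re (cfc (fun t : ℝ => t ^ q) G).trace ^ (1 / q) := by
  have hH := hA.isHermitian
  set b := hH.eigenvectorBasis
  set g : n → ℝ := fun j => RCLike.re (star ⇑(b j) ⬝ᵥ G *ᵥ ⇑(b j))
  have htrace : RCLike.re (G * A).trace = ∑ j, hH.eigenvalues j * g j := by
    rw [hH.trace_eq_sum_dotProduct_eigenvectorBasis, map_sum]
    refine Finset.sum_congr rfl fun j _ => ?_
    rw [← mulVec_mulVec, hH.mulVec_eigenvectorBasis, mulVec_smul, dotProduct_smul,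
      RCLike.real_smul_eq_coe_mul, RCLike.re_ofReal_mul]
  have hpow : ∑ j, g j ^ q ≤ RCLike.re (cfc (fun t : ℝ => t ^ q) G).trace := by
    rw [hH.trace_eq_sum_dotProduct_eigenvectorBasis, map_sum]
    exact Finset.sum_le_sum fun j _ => hG.re_dotProduct_mulVec_rpow_le hpq.symm.lt.le
      (hH.re_dotProduct_eigenvectorBasis j).le
  rw [htrace, hH.trace_cfc, map_sum]
  simp only [RCLike.ofReal_re]
  refine (Real.inner_le_Lp_mul_Lq_of_nonneg _ hpq (fun j _ => hA.eigenvalues_nonneg j)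
    (fun j _ => hG.re_dotProduct_nonneg _)).trans ?_
  exact mul_le_mul_of_nonneg_left
    (Real.rpow_le_rpow (Finset.sum_nonneg fun j _ => Real.rpow_nonneg (hG.re_dotProduct_nonneg _) q)
      hpow hpq.symm.one_div_nonneg)
    (Real.rpow_nonneg (Finset.sum_nonneg fun j _ => Real.rpow_nonneg (hA.eigenvalues_nonneg j) p) _)

lemma PosSemidef.re_trace_cfc_rpow_conjTranspose_mul_mul_le {m : Type*} [Fintype m]
    [DecidableEq m] {A : Matrix m m 𝕜} (hA : A.PosSemidef) {C : Matrix m n 𝕜}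
    (hC : (1 - Cᴴ * C).PosSemidef) {q : ℝ} (hq : 1 ≤ q) :
    RCLike.re (cfc (fun t : ℝ => t ^ q) (Cᴴ * A * C)).trace ≤
      RCLike.re (cfc (fun t : ℝ => t ^ q) A * (C * Cᴴ)).trace := by
  have hM := (hA.conjTranspose_mul_mul_same C).isHermitian
  set b := hM.eigenvectorBasis
  have hcontr : ∀ j, RCLike.re (star (C *ᵥ ⇑(b j)) ⬝ᵥ C *ᵥ ⇑(b j)) ≤ 1 := fun j => by
    have h := hC.re_dotProduct_nonneg (b j)
    rw [sub_mulVec, one_mulVec, dotProduct_sub, map_sub, ← mulVec_mulVec, dotProduct_mulVec,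
      ← star_mulVec, hM.re_dotProduct_eigenvectorBasis] at h
    linarith
  have hcycle : (cfc (fun t : ℝ => t ^ q) A * (C * Cᴴ)).trace =
      (Cᴴ * cfc (fun t : ℝ => t ^ q) A * C).trace := by
    rw [trace_mul_cycle, trace_mul_comm]
  rw [hM.trace_cfc, hcycle, hM.trace_eq_sum_dotProduct_eigenvectorBasis, map_sum, map_sum]
  refine Finset.sum_le_sum fun j _ => ?_
  rw [RCLike.ofReal_re, hM.eigenvalues_eq, star_dotProduct_conjTranspose_mul_mul_mulVec,
    star_dotProduct_conjTranspose_mul_mul_mulVec]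
  exact hA.re_dotProduct_mulVec_rpow_le hq (hcontr j)

lemma cfc_mul_eq_self_of_range_le {σ ρ : Matrix n n 𝕜} (hσ : σ.PosSemidef) {g : ℝ → ℝ}
    (hg : ∀ t, 0 < t → g t = 1)
    (h : LinearMap.range (toLin' ρ) ≤ LinearMap.range (toLin' σ)) :
    cfc g σ * ρ = ρ := by
  have hid : cfc (fun t : ℝ => t) σ = σ := cfc_id' ℝ σ hσ.isHermitian.isSelfAdjoint
  have hσσ : cfc g σ * σ = σ := by
    nth_rw 2 [← hid]
    rw [← cfc_mul g (fun t => t) σ (σ.finite_real_spectrum.continuousOn _)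
      (σ.finite_real_spectrum.continuousOn _)]
    conv_rhs => rw [← hid]
    refine cfc_congr fun t ht => ?_
    rcases (spectrum_nonneg_of_nonneg hσ.nonneg ht).eq_or_lt with h0 | h0
    · simp [← h0]
    · simp [hg t h0]
  refine toLin'.injective (LinearMap.ext fun v => ?_)
  obtain ⟨w, hw⟩ := h ⟨v, rfl⟩
  simp only [toLin'_apply] at hw ⊢
  rw [← mulVec_mulVec, ← hw, mulVec_mulVec, hσσ]

lemma trace_rpow_sandwich_mul_rpow_neg_sandwich {σ ρ : Matrix n n 𝕜} (hσ : σ.PosSemidef)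
    (h : LinearMap.range (toLin' ρ) ≤ LinearMap.range (toLin' σ))
    (hρ : ρ.IsHermitian) (T : Matrix n n 𝕜) (s : ℝ) :
    ((cfc (fun t : ℝ => t ^ s) σ * T * cfc (fun t : ℝ => t ^ s) σ) *
      (cfc (fun t : ℝ => t ^ (-s)) σ * ρ * cfc (fun t : ℝ => t ^ (-s)) σ)).trace =
      (T * ρ).trace := by
  set B := cfc (fun t : ℝ => t ^ s) σ
  set B' := cfc (fun t : ℝ => t ^ (-s)) σ
  set P := cfc (fun t : ℝ => t ^ s * t ^ (-s)) σ
  have hBB' : B * B' = P := (cfc_mul _ _ σ (σ.finite_real_spectrum.continuousOn _)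
    (σ.finite_real_spectrum.continuousOn _)).symm
  have hB'B : B' * B = P := by
    rw [← cfc_mul _ _ σ (σ.finite_real_spectrum.continuousOn _)
      (σ.finite_real_spectrum.continuousOn _)]
    simp only [P, mul_comm]
  have hPρ : P * ρ = ρ := cfc_mul_eq_self_of_range_le hσ (fun t ht => by
    rw [← Real.rpow_add ht, add_neg_cancel, Real.rpow_zero]) h
  have hρP : ρ * P = ρ := by
    have := congrArg conjTranspose hPρ
    rwa [conjTranspose_mul, hρ.eq, (isHermitian_cfc _ σ).eq] at this
  calc (B * T * B * (B' * ρ * B')).trace = (T * (B * B') * ρ * (B' * B)).trace := by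
        rw [mul_assoc B, mul_assoc B, trace_mul_comm B]; simp only [mul_assoc]
    _ = (T * ρ).trace := by rw [hBB', hB'B, mul_assoc T, hPρ, mul_assoc, hρP]

lemma PosSemidef.cfc_rpow_rpow_mul_rpow_eq_self {σ : Matrix n n 𝕜} (hσ : σ.PosSemidef) {β : ℝ}
    (hβ : 0 < β) :
    cfc (fun t : ℝ => t ^ β)
      (cfc (fun t : ℝ => t ^ (1 / (2 * β))) σ * cfc (fun t : ℝ => t ^ (1 / (2 * β))) σ) = σ := by
  rw [← cfc_mul _ _ σ (σ.finite_real_spectrum.continuousOn _)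
      (σ.finite_real_spectrum.continuousOn _),
    ← cfc_comp' _ _ σ ((σ.finite_real_spectrum.image _).continuousOn _)
      (σ.finite_real_spectrum.continuousOn _) hσ.isHermitian.isSelfAdjoint]
  conv_rhs => rw [← cfc_id' ℝ σ hσ.isHermitian.isSelfAdjoint]
  refine cfc_congr fun t ht => ?_
  have ht0 := spectrum_nonneg_of_nonneg hσ.nonneg ht
  rw [← Real.rpow_add' ht0 (by positivity), ← Real.rpow_mul ht0,
    show (1 / (2 * β) + 1 / (2 * β)) * β = 1 by field_simp; ring, Real.rpow_one]

lemma PosSemidef.re_trace_rpow_sandwich_le {σ T : Matrix n n 𝕜} (hσ : σ.PosSemidef)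
    (hT : T.PosSemidef) (hT1 : (1 - T).PosSemidef) {β : ℝ} (hβ : 1 ≤ β) :
    RCLike.re (cfc (fun t : ℝ => t ^ β) (cfc (fun t : ℝ => t ^ (1 / (2 * β))) σ * T *
      cfc (fun t : ℝ => t ^ (1 / (2 * β))) σ)).trace ≤ RCLike.re (σ * T).trace := by
  set B := cfc (fun t : ℝ => t ^ (1 / (2 * β))) σ
  set C := CFC.sqrt T
  have hB : B.IsHermitian := isHermitian_cfc _ σ
  have hC : C.IsHermitian := (CFC.sqrt_nonneg T).posSemidef.isHermitian
  have hCC : C * C = T := CFC.sqrt_mul_sqrt_self T hT.nonneg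
  have hBB : (B * B).PosSemidef := by
    simpa only [hB.eq] using posSemidef_conjTranspose_mul_self B
  have hBTB : B * T * B = (B * C) * (B * C)ᴴ := by
    rw [conjTranspose_mul, hB.eq, hC.eq, ← hCC]; simp only [mul_assoc]
  have hCBBC : (B * C)ᴴ * (B * C) = Cᴴ * (B * B) * C := by
    rw [conjTranspose_mul, hB.eq, hC.eq]; simp only [mul_assoc]
  rw [hBTB, trace_cfc_mul_conjTranspose, hCBBC]
  refine (hBB.re_trace_cfc_rpow_conjTranspose_mul_mul_le (by rwa [hC.eq, hCC]) hβ).trans_eq ?_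
  rw [hσ.cfc_rpow_rpow_mul_rpow_eq_self (zero_lt_one.trans_le hβ), hC.eq, hCC]

end Matrix

namespace CQ

variable {X d : Type*}

section

variable [Fintype d] [DecidableEq d]

lemma matFun_eq_cfc {A : Matrix d d ℂ} (hA : A.IsHermitian) (f : ℝ → ℝ) :
    matFun f A = cfc f A := by
  rw [matFun, dif_pos hA, hA.cfc_eq_mul_diagonal_mul]
  rfl

lemma matRpow_eq_cfc {A : Matrix d d ℂ} (hA : A.IsHermitian) (r : ℝ) :
    matRpow A r = cfc (fun t : ℝ => t ^ r) A :=
  matFun_eq_cfc hA _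

/-- `Q̃_α(ρ‖σ)`. -/
def sandRenyiQ (α : ℝ) (ρ σ : Matrix d d ℂ) : ℝ :=
  (matRpow (matRpow σ ((1 - α) / (2 * α)) * ρ * matRpow σ ((1 - α) / (2 * α))) α).trace.re

lemma sandRenyi_eq_of_suppLE {α : ℝ} {ρ σ : Matrix d d ℂ} (h : suppLE ρ σ) :
    sandRenyi α ρ σ = (((α - 1)⁻¹ * Real.log (sandRenyiQ α ρ σ) : ℝ) : EReal) :=
  if_pos h

lemma sandRenyi_ne_bot (α : ℝ) (ρ σ : Matrix d d ℂ) : sandRenyi α ρ σ ≠ ⊥ := by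
  unfold sandRenyi
  split_ifs
  exacts [EReal.coe_ne_bot _, top_ne_bot]

lemma suppLE_and_sandRenyiQ_le_of_sandRenyi_le {α D : ℝ} (hα : 1 < α) {ρ σ : Matrix d d ℂ}
    (h : sandRenyi α ρ σ ≤ D) :
    suppLE ρ σ ∧ sandRenyiQ α ρ σ ≤ Real.exp ((α - 1) * D) := by
  have hsupp : suppLE ρ σ := by
    by_contra hs
    rw [sandRenyi, if_neg hs, top_le_iff] at h
    exact EReal.coe_ne_top D h
  refine ⟨hsupp, (Real.le_exp_log _).trans (Real.exp_le_exp.mpr ?_)⟩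
  rw [sandRenyi_eq_of_suppLE hsupp, EReal.coe_le_coe_iff, inv_mul_le_iff₀ (by linarith)] at h
  exact h

lemma re_trace_mul_rpow_le_sandRenyiQ_mul {ρ σ T : Matrix d d ℂ} (hρ : ρ.PosSemidef)
    (hσ : σ.PosSemidef) (hsupp : suppLE ρ σ) (hT : T.PosSemidef) (hT1 : (1 - T).PosSemidef)
    {α : ℝ} (hα : 1 < α) :
    (T * ρ).trace.re ^ α ≤ sandRenyiQ α ρ σ * (T * σ).trace.re ^ (α - 1) := by
  set β := α / (α - 1)
  have hαβ : α.HolderConjugate β := .conjExponent hα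
  set B := cfc (fun t : ℝ => t ^ (1 / (2 * β))) σ
  set B' := cfc (fun t : ℝ => t ^ (-(1 / (2 * β)))) σ
  have hexp : (1 - α) / (2 * α) = -(1 / (2 * β)) := by
    simp only [β]; field_simp [hαβ.sub_one_ne_zero]; ring
  have hX : (B' * ρ * B').PosSemidef := hρ.cfc_mul_mul_cfc_same _ σ
  have hG : (B * T * B).PosSemidef := hT.cfc_mul_mul_cfc_same _ σ
  have hQ : sandRenyiQ α ρ σ = (cfc (fun t : ℝ => t ^ α) (B' * ρ * B')).trace.re := by
    rw [sandRenyiQ, hexp, matRpow_eq_cfc hσ.isHermitian, matRpow_eq_cfc hX.isHermitian]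
  have htrace : (T * ρ).trace.re = ((B * T * B) * (B' * ρ * B')).trace.re := by
    rw [Matrix.trace_rpow_sandwich_mul_rpow_neg_sandwich hσ hsupp hρ.isHermitian]
  have hholder : (T * ρ).trace.re ≤ sandRenyiQ α ρ σ ^ (1 / α) * (T * σ).trace.re ^ (1 / β) := by
    rw [htrace, hQ, Matrix.trace_mul_comm T σ]
    refine (hG.re_trace_mul_le_Lp_mul_Lq hX hαβ).trans (mul_le_mul_of_nonneg_left ?_
      (Real.rpow_nonneg (hX.re_trace_cfc_rpow_nonneg α) _))
    exact Real.rpow_le_rpow (hG.re_trace_cfc_rpow_nonneg β)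
      (hσ.re_trace_rpow_sandwich_le hT hT1 hαβ.symm.lt.le) hαβ.symm.one_div_nonneg
  have hQ0 : 0 ≤ sandRenyiQ α ρ σ := hQ ▸ hX.re_trace_cfc_rpow_nonneg α
  have hb0 : 0 ≤ (T * σ).trace.re := hT.re_trace_mul_nonneg hσ
  calc (T * ρ).trace.re ^ α
      ≤ (sandRenyiQ α ρ σ ^ (1 / α) * (T * σ).trace.re ^ (1 / β)) ^ α :=
        Real.rpow_le_rpow (hT.re_trace_mul_nonneg hρ) hholder hαβ.nonneg
    _ = sandRenyiQ α ρ σ * (T * σ).trace.re ^ (α - 1) := by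
        rw [Real.mul_rpow (Real.rpow_nonneg hQ0 _) (Real.rpow_nonneg hb0 _),
          ← Real.rpow_mul hQ0, ← Real.rpow_mul hb0, one_div_mul_cancel hαβ.ne_zero,
          Real.rpow_one]
        congr 2
        simp only [β]; field_simp [hαβ.sub_one_ne_zero]

variable [Fintype X]

lemma chRenyiDiv_ne_bot [Nonempty X] (α : ℝ) (Φ₁ Φ₂ : X → Matrix d d ℂ) :
    chRenyiDiv α Φ₁ Φ₂ ≠ ⊥ :=
  ne_bot_of_le_ne_bot (sandRenyi_ne_bot α _ _)
    (le_iSup (fun x => sandRenyi α (Φ₁ x) (Φ₂ x)) (Classical.arbitrary X))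

lemma typeIErrVal_eq {Φ : X → Matrix d d ℂ} (hΦ : IsCQChannel Φ) {p : X → ℝ}
    (hp : IsProbDist p) (T : X → Matrix d d ℂ) :
    typeIErrVal Φ p T = 1 - ∑ x, p x * (T x * Φ x).trace.re := by
  simp only [typeIErrVal, Matrix.sub_mul, one_mul, Matrix.trace_sub, Complex.sub_re, (hΦ _).2,
    Complex.one_re, mul_sub, mul_one, Finset.sum_sub_distrib, hp.2]

lemma exp_neg_mul_rpow_le_typeIIErr [Nonempty X] {α ε D : ℝ} (hα : 1 < α) (hε0 : 0 ≤ ε)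
    (hε1 : ε ≤ 1) {Φ₁ Φ₂ : X → Matrix d d ℂ} (h₁ : IsCQChannel Φ₁) (h₂ : IsCQChannel Φ₂)
    (hD : ∀ x, suppLE (Φ₁ x) (Φ₂ x) ∧ sandRenyiQ α (Φ₁ x) (Φ₂ x) ≤ Real.exp ((α - 1) * D)) :
    Real.exp (-D) * (1 - ε) ^ (α / (α - 1)) ≤ typeIIErr ε Φ₁ Φ₂ := by
  have hα1 : 1 ≤ α / (α - 1) := by rw [le_div_iff₀ (by linarith)]; linarith
  refine le_csInf ⟨_, fun _ => (Fintype.card X : ℝ)⁻¹, fun _ => 1, ⟨fun _ => by positivity, ?_⟩,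
    fun _ => ⟨Matrix.PosSemidef.one, by simp [Matrix.PosSemidef.zero]⟩, by simp [typeIErrVal, hε0],
    rfl⟩ ?_
  · simp [Finset.card_univ]
  rintro _ ⟨p, T, hp, hT, hI, rfl⟩
  set q : X → ℝ := fun x => (T x * Φ₁ x).trace.re
  have hq : ∀ x, 0 ≤ q x := fun x => (hT x).1.re_trace_mul_nonneg (h₁ x).1
  have hsum : 1 - ε ≤ ∑ x, p x * q x := by rw [typeIErrVal_eq h₁ hp] at hI; linarith
  have hr : ∀ x, Real.exp (-D) * q x ^ (α / (α - 1)) ≤ (T x * Φ₂ x).trace.re := fun x =>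
    Real.exp_neg_mul_rpow_le_of_rpow_le hα (hq x) ((hT x).1.re_trace_mul_nonneg (h₂ x).1)
      ((re_trace_mul_rpow_le_sandRenyiQ_mul (h₁ x).1 (h₂ x).1 (hD x).1 (hT x).1 (hT x).2 hα).trans
        (mul_le_mul_of_nonneg_right (hD x).2 (Real.rpow_nonneg
          ((hT x).1.re_trace_mul_nonneg (h₂ x).1) _)))
  calc Real.exp (-D) * (1 - ε) ^ (α / (α - 1))
      ≤ Real.exp (-D) * (∑ x, p x * q x) ^ (α / (α - 1)) := by gcongr
    _ ≤ Real.exp (-D) * ∑ x, p x * q x ^ (α / (α - 1)) := by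
        gcongr
        exact Real.rpow_sum_mul_le_sum_mul_rpow_of_sum_le_one _ hα1 hp.1 hp.2.le hq
    _ = ∑ x, p x * (Real.exp (-D) * q x ^ (α / (α - 1))) := by
        rw [Finset.mul_sum]; simp only [mul_left_comm]
    _ ≤ ∑ x, p x * (T x * Φ₂ x).trace.re := by
        gcongr with x
        exacts [hp.1 x, hr x]

end

/-- **Bound on type II errors between CQ channels** (Lemma 3.4): for `α > 1`, `ε ∈ [0,1)`, and
CQ channels `Φ₁, Φ₂ : X → D(H)`,
`−log β_ε(Φ₁‖Φ₂) ≤ D̃_α(Φ₁‖Φ₂) + (α/(α−1)) log(1/(1−ε))`. -/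
theorem bound_on_typeII_errors_between_CQ_channels
    {X d : Type*} [Fintype X] [Nonempty X] [Fintype d] [DecidableEq d]
    (α ε : ℝ) (hα : 1 < α) (hε0 : 0 ≤ ε) (hε1 : ε < 1)
    (Φ₁ Φ₂ : X → Matrix d d ℂ) (h₁ : IsCQChannel Φ₁) (h₂ : IsCQChannel Φ₂) :
    ((-Real.log (typeIIErr ε Φ₁ Φ₂) : ℝ) : EReal) ≤
      chRenyiDiv α Φ₁ Φ₂ + (((α / (α - 1)) * Real.log (1 / (1 - ε)) : ℝ) : EReal) := by
  by_cases htop : chRenyiDiv α Φ₁ Φ₂ = ⊤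
  · rw [htop, EReal.top_add_coe]
    exact le_top
  set D := (chRenyiDiv α Φ₁ Φ₂).toReal
  have hD : chRenyiDiv α Φ₁ Φ₂ = D := (EReal.coe_toReal htop (chRenyiDiv_ne_bot α Φ₁ Φ₂)).symm
  have hpow : 0 < (1 - ε) ^ (α / (α - 1)) := Real.rpow_pos_of_pos (sub_pos.mpr hε1) _
  have hβ := exp_neg_mul_rpow_le_typeIIErr hα hε0 hε1.le h₁ h₂ fun x =>
    suppLE_and_sandRenyiQ_le_of_sandRenyi_le hα
      ((le_iSup (fun x => sandRenyi α (Φ₁ x) (Φ₂ x)) x).trans hD.le)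
  have hlog := Real.log_le_log (mul_pos (Real.exp_pos _) hpow) hβ
  rw [Real.log_mul (Real.exp_pos _).ne' hpow.ne', Real.log_exp,
    Real.log_rpow (sub_pos.mpr hε1)] at hlog
  rw [hD, ← EReal.coe_add, EReal.coe_le_coe_iff, one_div, Real.log_inv]
  linarith

end CQ
end
end

section
/- Rounding lemma of full-rank quantum states: For any sequence {C_n > 0} of parameters and any sequence {ρ^{(n)} ∈ D(H^{⊗n})} of full-rank quantum states satisfying ρ^{(n)} ≥ e^{−C_n n} I for every n, there exists a sequence {ρ̃^{(n)} ∈ D(H^{⊗n})} of quantum states such that for every n: e^{−C_n} ρ^{(n)} ≤ ρ̃^{(n)} ≤ e^{C_n} ρ^{(n)} (as operator inequalities), and the number of distinct eigenvalues of ρ̃^{(n)} is at most n + 1. -/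
open scoped Kronecker
open Filter Matrix
open scoped ComplexOrder

attribute [local instance] Classical.propDecidable

noncomputable section

namespace CQ

variable {X d : Type*}

/-!
Round every eigenvalue `λ` of `ρ` down to the largest power `e^{-ck} ≤ λ` and renormalise.
Rounding costs at most a factor `e^{-c}`, so the normaliser lies in `[e^{-c}, 1]` and the result
lies between `e^{-c} ρ` and `e^{c} ρ`; since `e^{-cn} ≤ λ ≤ 1`, only the exponents
`k = 0, …, n` occur.
-/

section MatrixSpectrum

open scoped MatrixOrder

variable {m : Type*} [Fintype m] [DecidableEq m] {A : Matrix m m ℂ}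

lemma _root_.Matrix.IsHermitian.trace_cfc_s10 (hA : A.IsHermitian) (f : ℝ → ℝ) :
    (cfc f A).trace = ∑ i, (f (hA.eigenvalues i) : ℂ) := by
  rw [hA.cfc_eq, Matrix.IsHermitian.cfc, Unitary.conjStarAlgAut_apply, Matrix.trace_mul_cycle,
    Unitary.coe_star_mul_self, one_mul, Matrix.trace_diagonal]
  rfl

lemma _root_.Matrix.IsHermitian.ncard_spectrum_eq (hA : A.IsHermitian) :
    (spectrum ℂ A).ncard = (spectrum ℝ A).ncard := by
  rw [hA.spectrum_eq_image_range, hA.spectrum_real_eq_range_eigenvalues,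
    Set.ncard_image_of_injective _ RCLike.ofReal_injective]

lemma _root_.Matrix.PosSemidef.sum_eigenvalues_eq_one (hA : A.PosSemidef) (htr : A.trace = 1) :
    ∑ i, hA.isHermitian.eigenvalues i = 1 := by
  have h := hA.isHermitian.trace_eq_sum_eigenvalues
  rw [htr, ← RCLike.ofReal_sum] at h
  exact Complex.ofReal_eq_one.mp h.symm

lemma _root_.Matrix.PosSemidef.spectrum_subset_Icc (hA : A.PosSemidef) (htr : A.trace = 1)
    {r : ℝ} (hr : algebraMap ℝ (Matrix m m ℂ) r ≤ A) : spectrum ℝ A ⊆ Set.Icc r 1 := by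
  intro x hx
  refine ⟨(algebraMap_le_iff_le_spectrum hA.isHermitian.isSelfAdjoint).mp hr x hx, ?_⟩
  obtain ⟨i, rfl⟩ := hA.isHermitian.spectrum_real_eq_range_eigenvalues ▸ hx
  exact hA.sum_eigenvalues_eq_one htr ▸
    Finset.single_le_sum (fun j _ => hA.eigenvalues_nonneg j) (Finset.mem_univ i)

end MatrixSpectrum

/-- For `c > 0`, the largest integer power of `e^{-c}` that is at most `x > 0`. -/
def expFloor (c x : ℝ) : ℝ := Real.exp (-c * ⌈-Real.log x / c⌉)

section expFloor

variable {c x : ℝ}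

lemma expFloor_pos : 0 < expFloor c x := Real.exp_pos _

lemma expFloor_le (hc : 0 < c) (hx : 0 < x) : expFloor c x ≤ x := by
  have hk : -Real.log x / c ≤ ⌈-Real.log x / c⌉ := Int.le_ceil _
  rw [div_le_iff₀ hc] at hk
  calc expFloor c x ≤ Real.exp (Real.log x) := Real.exp_le_exp.mpr (by linarith)
    _ = x := Real.exp_log hx

lemma exp_neg_mul_le_expFloor (hc : 0 < c) (hx : 0 < x) :
    Real.exp (-c) * x ≤ expFloor c x := by
  have hk : (⌈-Real.log x / c⌉ : ℝ) < -Real.log x / c + 1 := Int.ceil_lt_add_one _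
  rw [div_add_one hc.ne', lt_div_iff₀ hc] at hk
  calc Real.exp (-c) * x = Real.exp (-c + Real.log x) := by rw [Real.exp_add, Real.exp_log hx]
    _ ≤ expFloor c x := Real.exp_le_exp.mpr (by linarith)

lemma expFloor_mem_range {N : ℕ} (hc : 0 < c) (hlow : Real.exp (-c * N) ≤ x) (hx1 : x ≤ 1) :
    expFloor c x ∈ Set.range fun j : Fin (N + 1) => Real.exp (-c * j) := by
  have hx : 0 < x := (Real.exp_pos _).trans_le hlow
  have hk0 : 0 ≤ ⌈-Real.log x / c⌉ :=
    Int.ceil_nonneg (div_nonneg (neg_nonneg.mpr (Real.log_nonpos hx.le hx1)) hc.le)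
  have hkN : ⌈-Real.log x / c⌉ ≤ N := by
    rw [Int.ceil_le, div_le_iff₀ hc]
    have := Real.log_le_log (Real.exp_pos _) hlow
    rw [Real.log_exp] at this
    push_cast
    linarith
  obtain ⟨k, hk⟩ := Int.eq_ofNat_of_zero_le hk0
  rw [hk, Nat.cast_le] at hkN
  exact ⟨⟨k, Nat.lt_succ_of_le hkN⟩, by simp [expFloor, hk]⟩

end expFloor

lemma _root_.Set.ncard_le_of_subset_range {α : Type*} {s : Set α} {k : ℕ} {f : Fin k → α}
    (h : s ⊆ Set.range f) : s.ncard ≤ k :=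
  calc s.ncard ≤ (f '' Set.univ).ncard := by
        rw [Set.image_univ]; exact Set.ncard_le_ncard h (Set.finite_range f)
    _ ≤ (Set.univ : Set (Fin k)).ncard := Set.ncard_image_le Set.finite_univ
    _ = k := by simp

open scoped MatrixOrder in
theorem exists_rounded_density {m : Type*} [Fintype m] [DecidableEq m] {A : Matrix m m ℂ}
    (hA : A.PosSemidef) (htr : A.trace = 1) {c : ℝ} (hc : 0 < c) {N : ℕ}
    (hmin : algebraMap ℝ (Matrix m m ℂ) (Real.exp (-c * N)) ≤ A) :
    ∃ σ : Matrix m m ℂ, σ.PosSemidef ∧ σ.trace = 1 ∧ Real.exp (-c) • A ≤ σ ∧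
      σ ≤ Real.exp c • A ∧ (spectrum ℂ σ).ncard ≤ N + 1 := by
  set ev := hA.isHermitian.eigenvalues
  have hev := hA.spectrum_subset_Icc htr hmin
  have hpos : ∀ x ∈ spectrum ℝ A, 0 < x := fun x hx => (Real.exp_pos _).trans_le (hev hx).1
  set τ := ∑ i, expFloor c (ev i)
  have hτ1 : τ ≤ 1 := hA.sum_eigenvalues_eq_one htr ▸ Finset.sum_le_sum fun i _ =>
    expFloor_le hc (hpos _ (hA.isHermitian.eigenvalues_mem_spectrum_real i))
  have hτc : Real.exp (-c) ≤ τ :=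
    calc Real.exp (-c) = ∑ i, Real.exp (-c) * ev i := by
          rw [← Finset.mul_sum, hA.sum_eigenvalues_eq_one htr, mul_one]
      _ ≤ τ := Finset.sum_le_sum fun i _ =>
          exp_neg_mul_le_expFloor hc (hpos _ (hA.isHermitian.eigenvalues_mem_spectrum_real i))
  have hτ : 0 < τ := (Real.exp_pos _).trans_le hτc
  have hcont (f : ℝ → ℝ) : ContinuousOn f (spectrum ℝ A) := A.finite_real_spectrum.continuousOn f
  have hsa : IsSelfAdjoint A := hA.isHermitian.isSelfAdjoint
  refine ⟨cfc (fun x => τ⁻¹ * expFloor c x) A, ?_, ?_, ?_, ?_, ?_⟩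
  · exact LE.le.posSemidef (cfc_nonneg fun x _ => (mul_pos (inv_pos.mpr hτ) expFloor_pos).le)
  · have h : ∑ i, τ⁻¹ * expFloor c (ev i) = 1 := by rw [← Finset.mul_sum, inv_mul_cancel₀ hτ.ne']
    rw [hA.isHermitian.trace_cfc_s10]
    exact_mod_cast h
  · rw [← cfc_const_mul_id _ A hsa]
    refine cfc_mono (fun x hx => ?_) (hcont _) (hcont _)
    calc Real.exp (-c) * x ≤ expFloor c x := exp_neg_mul_le_expFloor hc (hpos x hx)
      _ ≤ τ⁻¹ * expFloor c x := le_mul_of_one_le_left expFloor_pos.le (one_le_inv₀ hτ |>.mpr hτ1)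
  · rw [← cfc_const_mul_id _ A hsa]
    refine cfc_mono (fun x hx => ?_) (hcont _) (hcont _)
    have hτinv : τ⁻¹ ≤ Real.exp c := by rwa [inv_le_comm₀ hτ (Real.exp_pos c), ← Real.exp_neg]
    exact mul_le_mul hτinv (expFloor_le hc (hpos x hx)) expFloor_pos.le (Real.exp_pos c).le
  · rw [(IsSelfAdjoint.isHermitian (cfc_predicate _ A)).ncard_spectrum_eq,
      cfc_map_spectrum _ A hsa (hcont _)]
    refine Set.ncard_le_of_subset_range (f := fun j => τ⁻¹ * Real.exp (-c * j)) ?_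
    rintro - ⟨x, hx, rfl⟩
    obtain ⟨j, hj⟩ := expFloor_mem_range hc (hev hx).1 (hev hx).2
    exact ⟨j, by simp only [← hj]⟩

theorem rounding_lemma_of_full_rank_states_general
    {d : Type*} [Fintype d] [DecidableEq d]
    (C : ℕ → ℝ) (hC : ∀ n, 0 < C n)
    (ρ : (n : ℕ) → Matrix (Fin n → d) (Fin n → d) ℂ)
    (hρ : ∀ n, (ρ n).PosSemidef ∧ (ρ n).trace = 1)
    (hfull : ∀ n,
      (ρ n - Real.exp (-(C n) * n) • (1 : Matrix (Fin n → d) (Fin n → d) ℂ)).PosSemidef) :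
    ∃ ρt : (n : ℕ) → Matrix (Fin n → d) (Fin n → d) ℂ,
      ∀ n, (ρt n).PosSemidef ∧ (ρt n).trace = 1 ∧
        (ρt n - Real.exp (-(C n)) • ρ n).PosSemidef ∧
        (Real.exp (C n) • ρ n - ρt n).PosSemidef ∧
        (spectrum ℂ (ρt n)).ncard ≤ n + 1 := by
  choose ρt hρt using fun n => exists_rounded_density (hρ n).1 (hρ n).2 (hC n) (N := n)
    (by rw [Algebra.algebraMap_eq_smul_one]; exact hfull n)
  exact ⟨ρt, hρt⟩

/-- **Rounding lemma of full-rank quantum states** (Lemma 3.8): for parameters `C_n > 0` and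
full-rank density operators `ρ^{(n)} ∈ D(H^{⊗n})` with `ρ^{(n)} ≥ e^{−C_n n}·I`, there exist
density operators `ρ̃^{(n)}` with `e^{−C_n} ρ^{(n)} ≤ ρ̃^{(n)} ≤ e^{C_n} ρ^{(n)}` and at most
`n + 1` distinct eigenvalues. -/
theorem rounding_lemma_of_full_rank_states
    {d : Type*} [Fintype d] [DecidableEq d] [Nonempty d]
    (C : ℕ → ℝ) (hC : ∀ n, 0 < C n)
    (ρ : (n : ℕ) → Matrix (Fin n → d) (Fin n → d) ℂ)
    (hρ : ∀ n, (ρ n).PosSemidef ∧ (ρ n).trace = 1)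
    (hfull : ∀ n,
      (ρ n - Real.exp (-(C n) * n) • (1 : Matrix (Fin n → d) (Fin n → d) ℂ)).PosSemidef) :
    ∃ ρt : (n : ℕ) → Matrix (Fin n → d) (Fin n → d) ℂ,
      ∀ n, (ρt n).PosSemidef ∧ (ρt n).trace = 1 ∧
        (ρt n - Real.exp (-(C n)) • ρ n).PosSemidef ∧
        (Real.exp (C n) • ρ n - ρt n).PosSemidef ∧
        (spectrum ℂ (ρt n)).ncard ≤ n + 1 :=
  rounding_lemma_of_full_rank_states_general C hC ρ hρ hfull

end CQ
end
end
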